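/- arXiv:2106.02969 — 11 statements merged into one kernel-verified Lean document; each statement's English description precedes it below -/
import Mathlib

section
/- Let C : R^{d×d} → R^{d×d} be a deterministic contractive compression operator with parameter δ ∈ [0,1], i.e., ‖C(M)‖_F ≤ ‖M‖_F and ‖C(M) − M‖_F² ≤ (1−δ)‖M‖_F² for all M. Let f_i have L_F-Lipschitz Hessian in Frobenius norm. Set α = 1 − √(1−δ). Then for any H ∈ R^{d×d} and y, z ∈ R^d: ‖H + α C(∇²f_i(y) − H) − ∇²f_i(z)‖_F² ≤ (1 − α²)‖H − ∇²f_i(z)‖_F² + α L_F² ‖y − z‖². -/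
attribute [local instance] Matrix.frobeniusNormedAddCommGroup Matrix.frobeniusNormedSpace

open scoped RealInnerProductSpace

noncomputable def matToEuc (d : ℕ) :
    Matrix (Fin d) (Fin d) ℝ →ₗᵢ[ℝ] EuclideanSpace ℝ (Fin d × Fin d) where
  toLinearMap :=
    { toFun := fun A => (WithLp.equiv 2 _).symm fun p : Fin d × Fin d => A p.1 p.2
      map_add' := fun A B => rfl
      map_smul' := fun c A => rfl }
  norm_map' := fun A => by
    rw [EuclideanSpace.norm_eq, Matrix.frobenius_norm_def, Real.sqrt_eq_rpow]
    congr 1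
    rw [Fintype.sum_prod_type]
    refine Finset.sum_congr rfl fun i _ => Finset.sum_congr rfl fun j _ => ?_
    show ‖A i j‖ ^ (2:ℕ) = ‖A i j‖ ^ (2:ℝ)
    rw [← Real.rpow_natCast ‖A i j‖ 2]
    norm_num

lemma key {V : Type*} [NormedAddCommGroup V] [InnerProductSpace ℝ V]
    (α : ℝ) (hα0 : 0 ≤ α) (hα1 : α ≤ 1)
    (E M CM : V) (h1 : ‖CM‖ ≤ ‖M‖) (h2 : ‖CM - M‖ ≤ (1 - α) * ‖M‖) :
    ‖E + α • CM‖ ^ 2 ≤ (1 - α ^ 2) * ‖E‖ ^ 2 + α * ‖M + E‖ ^ 2 := by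
  have expand : ‖E + α • CM‖ ^ 2
      = ‖E‖ ^ 2 + 2 * (α * ⟪E, CM⟫) + α ^ 2 * ‖CM‖ ^ 2 := by
    rw [norm_add_sq_real, real_inner_smul_right, norm_smul, Real.norm_eq_abs,
      abs_of_nonneg hα0, mul_pow]
  have hinner : ⟪E, CM⟫ = ⟪E, M + E⟫ - ‖E‖ ^ 2 + ⟪E, CM - M⟫ := by
    rw [inner_sub_right, inner_add_right, real_inner_self_eq_norm_sq]; ring
  have hCS : ⟪E, CM - M⟫ ≤ ‖E‖ * ‖CM - M‖ := real_inner_le_norm _ _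
  have hm : ‖M‖ ^ 2 = ‖M + E‖ ^ 2 - 2 * ⟪E, M + E⟫ + ‖E‖ ^ 2 := by
    have h := norm_sub_sq_real (M + E) E
    rw [add_sub_cancel_right] at h
    rw [h, real_inner_comm]
  have he0 : (0:ℝ) ≤ ‖E‖ := norm_nonneg _
  have hm0 : (0:ℝ) ≤ ‖M‖ := norm_nonneg _
  have hc0 : (0:ℝ) ≤ ‖CM‖ := norm_nonneg _
  have hr0 : (0:ℝ) ≤ ‖CM - M‖ := norm_nonneg _
  have h1α : (0:ℝ) ≤ 1 - α := by linarith
  nlinarith [mul_le_mul_of_nonneg_left h2 he0, sq_nonneg (‖E‖ - ‖M‖),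
    mul_nonneg (mul_nonneg hα0 h1α) (sq_nonneg (‖E‖ - ‖M‖)),
    mul_le_mul h1 h1 hc0 hm0, sq_nonneg α, mul_nonneg hα0 h1α,
    mul_le_mul_of_nonneg_left (mul_le_mul_of_nonneg_left h2 he0) (mul_nonneg hα0 (by norm_num : (0:ℝ) ≤ 2)),
    mul_le_mul_of_nonneg_left (mul_le_mul h1 h1 hc0 hm0) (sq_nonneg α)]

/-- contractive compressor with `α = 1 - √(1-δ)`. -/
theorem fednl_contractive_step_small_alpha {d : ℕ}
    (C : Matrix (Fin d) (Fin d) ℝ → Matrix (Fin d) (Fin d) ℝ)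
    (δ : ℝ) (hδ0 : 0 ≤ δ) (hδ1 : δ ≤ 1)
    (hC1 : ∀ M : Matrix (Fin d) (Fin d) ℝ, ‖C M‖ ≤ ‖M‖)
    (hC2 : ∀ M : Matrix (Fin d) (Fin d) ℝ, ‖C M - M‖ ^ 2 ≤ (1 - δ) * ‖M‖ ^ 2)
    (LF : ℝ)
    (Hess : EuclideanSpace ℝ (Fin d) → Matrix (Fin d) (Fin d) ℝ)
    (hLip : ∀ x y : EuclideanSpace ℝ (Fin d), ‖Hess x - Hess y‖ ≤ LF * ‖x - y‖)
    (α : ℝ) (hα : α = 1 - Real.sqrt (1 - δ))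
    (H : Matrix (Fin d) (Fin d) ℝ) (y z : EuclideanSpace ℝ (Fin d)) :
    ‖H + α • C (Hess y - H) - Hess z‖ ^ 2
      ≤ (1 - α ^ 2) * ‖H - Hess z‖ ^ 2 + α * LF ^ 2 * ‖y - z‖ ^ 2 := by
  have h1δ : (0:ℝ) ≤ 1 - δ := by linarith
  have hα0 : 0 ≤ α := by
    rw [hα]
    have : Real.sqrt (1 - δ) ≤ 1 := Real.sqrt_le_one.mpr (by linarith)
    linarith
  have hα1 : α ≤ 1 := by
    rw [hα]; have := Real.sqrt_nonneg (1 - δ); linarith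
  set M := Hess y - H with hM
  set E := H - Hess z with hE
  have hgoal : H + α • C M - Hess z = E + α • C M := by
    rw [hE]; abel
  have h2 : ‖C M - M‖ ≤ (1 - α) * ‖M‖ := by
    have h := Real.sqrt_le_sqrt (hC2 M)
    rw [Real.sqrt_sq (norm_nonneg _), Real.sqrt_mul h1δ, Real.sqrt_sq (norm_nonneg _)] at h
    rw [hα]
    simpa using h
  have hkey := key (V := EuclideanSpace ℝ (Fin d × Fin d)) α hα0 hα1
    (matToEuc d E) (matToEuc d M) (matToEuc d (C M))
    (by rw [(matToEuc d).norm_map, (matToEuc d).norm_map]; exact hC1 M)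
    (by rw [← map_sub, (matToEuc d).norm_map, (matToEuc d).norm_map]; exact h2)
  rw [← map_smul, ← map_add, ← map_add, (matToEuc d).norm_map, (matToEuc d).norm_map,
    (matToEuc d).norm_map] at hkey
  have hD : M + E = Hess y - Hess z := by rw [hM, hE]; abel
  have hDle : ‖M + E‖ ^ 2 ≤ LF ^ 2 * ‖y - z‖ ^ 2 := by
    rw [hD]
    have h := hLip y z
    have := norm_nonneg (Hess y - Hess z)
    nlinarith
  calc ‖H + α • C M - Hess z‖ ^ 2 = ‖E + α • C M‖ ^ 2 := by rw [hgoal]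
    _ ≤ (1 - α ^ 2) * ‖E‖ ^ 2 + α * ‖M + E‖ ^ 2 := hkey
    _ ≤ (1 - α ^ 2) * ‖E‖ ^ 2 + α * (LF ^ 2 * ‖y - z‖ ^ 2) := by
        have := mul_le_mul_of_nonneg_left hDle hα0
        linarith
    _ = (1 - α ^ 2) * ‖H - Hess z‖ ^ 2 + α * LF ^ 2 * ‖y - z‖ ^ 2 := by rw [hE]; ring
end

section
/- Let C : R^{d×d} → R^{d×d} be a deterministic contractive compressor with parameter δ ∈ (0,1], and let f_i have L_F-Lipschitz Hessian in Frobenius norm. Then for any H ∈ R^{d×d} and y, z ∈ R^d: ‖H + C(∇²f_i(y) − H) − ∇²f_i(z)‖_F² ≤ (1 − δ/4)‖H − ∇²f_i(z)‖_F² + (6/δ − 7/2) L_F² ‖y − z‖². -/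
/-!
Write `M = ∇²f(y) - H`. The new estimate `H + C M` misses `∇²f(z)` by the compression error
`C M - M` plus the Hessian drift `∇²f(y) - ∇²f(z)`. Young's inequality, with the weight chosen so
that the contraction factor `1 - δ` of the compression error becomes `1 - δ/2`, and then again on
`M = (∇²f(y) - ∇²f(z)) - (H - ∇²f(z))` with the weight turning `1 - δ/2` into `1 - δ/4`, gives the
bound with drift coefficient `6/δ - 4 + δ/2 ≤ 6/δ - 7/2`; the Lipschitz bound finishes.
-/

attribute [local instance] Matrix.frobeniusNormedAddCommGroup Matrix.frobeniusNormedSpace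

/-- Young's inequality `(e + l)² ≤ e² / (1 - s) + l² / s`, stated so that it survives `s = 1`. -/
lemma sq_add_le_add_div_of_sq_le_one_sub_mul {e l P s : ℝ} (hs0 : 0 < s) (hs1 : s ≤ 1)
    (hP : 0 ≤ P) (he : e ^ 2 ≤ (1 - s) * P) :
    (e + l) ^ 2 ≤ P + l ^ 2 / s := by
  rw [← sub_nonneg, ← mul_nonneg_iff_of_pos_left hs0]
  have hexpand : s * (P + l ^ 2 / s - (e + l) ^ 2)
      = s * P + (1 - s) * l ^ 2 - s * e ^ 2 - 2 * s * e * l := by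
    field_simp
    ring
  rw [hexpand]
  rcases hs1.lt_or_eq with hs1 | rfl
  · nlinarith [sq_nonneg (s * e - (1 - s) * l), mul_nonneg hs0.le (sub_nonneg.2 he), sub_pos.2 hs1]
  · nlinarith [sq_nonneg e]

section Compressor

variable {E : Type*} [SeminormedAddCommGroup E] {C : E → E} {δ : ℝ}

lemma norm_add_compress_sub_sq_le_one_sub_half (hδ0 : 0 < δ) (hδ1 : δ ≤ 1)
    (hC : ∀ M : E, ‖C M - M‖ ^ 2 ≤ (1 - δ) * ‖M‖ ^ 2) (H G G' : E) :
    ‖H + C (G - H) - G'‖ ^ 2 ≤ (1 - δ / 2) * ‖G - H‖ ^ 2 + (2 / δ - 1) * ‖G - G'‖ ^ 2 := by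
  have hsplit : H + C (G - H) - G' = (C (G - H) - (G - H)) + (G - G') := by abel
  have h2δ : 0 < 2 - δ := by linarith
  have hs0 : 0 < δ / (2 - δ) := div_pos hδ0 h2δ
  have hs1 : δ / (2 - δ) ≤ 1 := (div_le_one h2δ).2 (by linarith)
  have hweight : (1 - δ) * ‖G - H‖ ^ 2 = (1 - δ / (2 - δ)) * ((1 - δ / 2) * ‖G - H‖ ^ 2) := by
    field_simp [h2δ.ne']
    ring
  have hyoung := sq_add_le_add_div_of_sq_le_one_sub_mul (l := ‖G - G'‖) hs0 hs1
    (mul_nonneg (by linarith) (sq_nonneg _)) ((hC (G - H)).trans_eq hweight)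
  have hcoeff : ‖G - G'‖ ^ 2 / (δ / (2 - δ)) = (2 / δ - 1) * ‖G - G'‖ ^ 2 := by
    field_simp
  calc ‖H + C (G - H) - G'‖ ^ 2
      ≤ (‖C (G - H) - (G - H)‖ + ‖G - G'‖) ^ 2 := by
        rw [hsplit]
        gcongr
        exact norm_add_le _ _
    _ ≤ _ := hyoung.trans_eq (by rw [hcoeff])

lemma norm_add_compress_sub_sq_le_one_sub_quarter (hδ0 : 0 < δ) (hδ1 : δ ≤ 1)
    (hC : ∀ M : E, ‖C M - M‖ ^ 2 ≤ (1 - δ) * ‖M‖ ^ 2) (H G G' : E) :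
    ‖H + C (G - H) - G'‖ ^ 2 ≤ (1 - δ / 4) * ‖H - G'‖ ^ 2 + (6 / δ - 4 + δ / 2) * ‖G - G'‖ ^ 2 := by
  have h4δ : 0 < 4 - δ := by linarith
  have h42δ : 0 < 4 - 2 * δ := by linarith
  have h42δ_ne : 4 - δ * 2 ≠ 0 := by linarith
  have hs0 : 0 < δ / (4 - δ) := div_pos hδ0 h4δ
  have hs1 : δ / (4 - δ) ≤ 1 := (div_le_one h4δ).2 (by linarith)
  have hweight : ‖H - G'‖ ^ 2
      = (1 - δ / (4 - δ)) * ((4 - δ) / (4 - 2 * δ) * ‖H - G'‖ ^ 2) := by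
    field_simp
    ring
  have hyoung := sq_add_le_add_div_of_sq_le_one_sub_mul (l := ‖G - G'‖) hs0 hs1
    (mul_nonneg (div_nonneg h4δ.le h42δ.le) (sq_nonneg _)) hweight.le
  have hGH : ‖G - H‖ ≤ ‖H - G'‖ + ‖G - G'‖ := by
    simpa [add_comm] using norm_sub_le (G - G') (H - G')
  calc ‖H + C (G - H) - G'‖ ^ 2
      ≤ (1 - δ / 2) * ‖G - H‖ ^ 2 + (2 / δ - 1) * ‖G - G'‖ ^ 2 :=
        norm_add_compress_sub_sq_le_one_sub_half hδ0 hδ1 hC H G G'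
    _ ≤ (1 - δ / 2) * (‖H - G'‖ + ‖G - G'‖) ^ 2 + (2 / δ - 1) * ‖G - G'‖ ^ 2 := by
        gcongr
        linarith
    _ ≤ (1 - δ / 2) * ((4 - δ) / (4 - 2 * δ) * ‖H - G'‖ ^ 2 + ‖G - G'‖ ^ 2 / (δ / (4 - δ)))
          + (2 / δ - 1) * ‖G - G'‖ ^ 2 := by
        gcongr
        linarith
    _ = _ := by
        field_simp
        ring

end Compressor

theorem fednl_contractive_step_alpha_one_general {d : ℕ}
    (C : Matrix (Fin d) (Fin d) ℝ → Matrix (Fin d) (Fin d) ℝ)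
    (δ : ℝ) (hδ0 : 0 < δ) (hδ1 : δ ≤ 1)
    (hC2 : ∀ M : Matrix (Fin d) (Fin d) ℝ, ‖C M - M‖ ^ 2 ≤ (1 - δ) * ‖M‖ ^ 2)
    (LF : ℝ)
    (Hess : EuclideanSpace ℝ (Fin d) → Matrix (Fin d) (Fin d) ℝ)
    (hLip : ∀ x y : EuclideanSpace ℝ (Fin d), ‖Hess x - Hess y‖ ≤ LF * ‖x - y‖)
    (H : Matrix (Fin d) (Fin d) ℝ) (y z : EuclideanSpace ℝ (Fin d)) :
    ‖H + C (Hess y - H) - Hess z‖ ^ 2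
      ≤ (1 - δ / 4) * ‖H - Hess z‖ ^ 2 + (6 / δ - 7 / 2) * LF ^ 2 * ‖y - z‖ ^ 2 := by
  have hdrift : ‖Hess y - Hess z‖ ^ 2 ≤ LF ^ 2 * ‖y - z‖ ^ 2 := by
    rw [← mul_pow]
    exact pow_le_pow_left₀ (norm_nonneg _) (hLip y z) 2
  have hcoeff : 6 / δ - 4 + δ / 2 ≤ 6 / δ - 7 / 2 := by linarith
  have hcoeff0 : 0 ≤ 6 / δ - 7 / 2 := by
    rw [sub_nonneg, le_div_iff₀ hδ0]
    linarith
  calc ‖H + C (Hess y - H) - Hess z‖ ^ 2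
      ≤ (1 - δ / 4) * ‖H - Hess z‖ ^ 2 + (6 / δ - 4 + δ / 2) * ‖Hess y - Hess z‖ ^ 2 :=
        norm_add_compress_sub_sq_le_one_sub_quarter hδ0 hδ1 hC2 H (Hess y) (Hess z)
    _ ≤ (1 - δ / 4) * ‖H - Hess z‖ ^ 2 + (6 / δ - 7 / 2) * (LF ^ 2 * ‖y - z‖ ^ 2) := by
        gcongr
    _ = _ := by ring

/-- contractive compressor with step size `α = 1`. -/
theorem fednl_contractive_step_alpha_one {d : ℕ}
    (C : Matrix (Fin d) (Fin d) ℝ → Matrix (Fin d) (Fin d) ℝ)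
    (δ : ℝ) (hδ0 : 0 < δ) (hδ1 : δ ≤ 1)
    (hC1 : ∀ M : Matrix (Fin d) (Fin d) ℝ, ‖C M‖ ≤ ‖M‖)
    (hC2 : ∀ M : Matrix (Fin d) (Fin d) ℝ, ‖C M - M‖ ^ 2 ≤ (1 - δ) * ‖M‖ ^ 2)
    (LF : ℝ)
    (Hess : EuclideanSpace ℝ (Fin d) → Matrix (Fin d) (Fin d) ℝ)
    (hLip : ∀ x y : EuclideanSpace ℝ (Fin d), ‖Hess x - Hess y‖ ≤ LF * ‖x - y‖)
    (H : Matrix (Fin d) (Fin d) ℝ) (y z : EuclideanSpace ℝ (Fin d)) :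
    ‖H + C (Hess y - H) - Hess z‖ ^ 2
      ≤ (1 - δ / 4) * ‖H - Hess z‖ ^ 2 + (6 / δ - 7 / 2) * LF ^ 2 * ‖y - z‖ ^ 2 :=
  fednl_contractive_step_alpha_one_general C δ hδ0 hδ1 hC2 LF Hess hLip H y z
end

section
/- Let C : R^{d×d} → R^{d×d} satisfy ‖C(M) − M‖_F² ≤ (1−δ)‖M‖_F² for all M, where δ ∈ [0,1]. Define the scaled operator C̃(M) := (‖M‖_F / ‖C(M)‖_F) · C(M) whenever C(M) ≠ 0 (and C̃(M) := 0 otherwise). Then for every M with ‖C(M)‖_F > ‖M‖_F, the scaled operator satisfies both ‖C̃(M)‖_F ≤ ‖M‖_F and ‖C̃(M) − M‖_F² ≤ (1−δ)‖M‖_F². -/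
/-!
The Frobenius norm comes from an inner product. In a real inner product space, rescaling `x`
down to the length `‖y‖ ≤ ‖x‖` of `y` does not increase the distance to `y`: expanding both
squares, `‖x - y‖² - ‖t • x - y‖² ≥ (‖x‖ - ‖y‖)²` for `t = ‖y‖ / ‖x‖`, by Cauchy–Schwarz.
Applied with `x = C M`, `y = M`, the rescaled compressor inherits the contraction bound of `C`.
-/

attribute [local instance] Matrix.frobeniusNormedAddCommGroup Matrix.frobeniusNormedSpace

noncomputable local instance Matrix.frobeniusInnerProductSpace {m n : Type*}
    [Fintype m] [Fintype n] : InnerProductSpace ℝ (Matrix m n ℝ) :=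
  InnerProductSpace.ofNorm ℝ fun A B => by
    have h := parallelogram_law_with_norm ℝ (WithLp.toLp 2 fun i => WithLp.toLp 2 (A i))
      (WithLp.toLp 2 fun i => WithLp.toLp 2 (B i))
    simp only [sq] at h
    exact h

theorem norm_smul_div_norm_self {E : Type*} [NormedAddCommGroup E] [NormedSpace ℝ E] {x : E}
    (hx : x ≠ 0) {r : ℝ} (hr : 0 ≤ r) :
    ‖(r / ‖x‖) • x‖ = r := by
  rw [norm_smul, Real.norm_of_nonneg (by positivity), div_mul_cancel₀ _ (norm_ne_zero_iff.2 hx)]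

theorem norm_smul_div_norm_sub_le {E : Type*} [NormedAddCommGroup E] [InnerProductSpace ℝ E]
    {x y : E} (h : ‖y‖ ≤ ‖x‖) :
    ‖(‖y‖ / ‖x‖) • x - y‖ ≤ ‖x - y‖ := by
  rcases eq_or_ne x 0 with rfl | hx
  · simp
  set t := ‖y‖ / ‖x‖
  have ht : t * ‖x‖ = ‖y‖ := div_mul_cancel₀ _ (norm_ne_zero_iff.2 hx)
  have ht1 : t ≤ 1 := div_le_one_of_le₀ h (norm_nonneg _)
  have hinner : inner ℝ x y ≤ ‖x‖ * ‖y‖ := real_inner_le_norm x y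
  refine (pow_le_pow_iff_left₀ (norm_nonneg _) (norm_nonneg _) two_ne_zero).1 ?_
  calc ‖t • x - y‖ ^ 2 = 2 * ‖y‖ ^ 2 - 2 * t * inner ℝ x y := by
        rw [norm_sub_sq_real, real_inner_smul_left, norm_smul_div_norm_self hx (norm_nonneg y)]
        ring
    _ ≤ 2 * ‖y‖ ^ 2 - 2 * t * inner ℝ x y + (‖x‖ - ‖y‖) ^ 2 := le_add_of_nonneg_right (sq_nonneg _)
    _ ≤ ‖x‖ ^ 2 - 2 * inner ℝ x y + ‖y‖ ^ 2 := by
        linarith [mul_le_mul_of_nonneg_left hinner (sub_nonneg.2 ht1), congrArg (· * ‖y‖) ht]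
    _ = ‖x - y‖ ^ 2 := (norm_sub_sq_real x y).symm

theorem scaled_compressor_contractive_general {d : ℕ}
    (C : Matrix (Fin d) (Fin d) ℝ → Matrix (Fin d) (Fin d) ℝ)
    (δ : ℝ)
    (hC : ∀ M : Matrix (Fin d) (Fin d) ℝ, ‖C M - M‖ ^ 2 ≤ (1 - δ) * ‖M‖ ^ 2)
    (M : Matrix (Fin d) (Fin d) ℝ) (hM : ‖M‖ < ‖C M‖) :
    ‖(‖M‖ / ‖C M‖) • C M‖ ≤ ‖M‖ ∧
      ‖(‖M‖ / ‖C M‖) • C M - M‖ ^ 2 ≤ (1 - δ) * ‖M‖ ^ 2 := by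
  have hCM : C M ≠ 0 := norm_pos_iff.1 ((norm_nonneg M).trans_lt hM)
  refine ⟨(norm_smul_div_norm_self hCM (norm_nonneg M)).le, ?_⟩
  exact (pow_le_pow_left₀ (norm_nonneg _) (norm_smul_div_norm_sub_le hM.le) 2).trans (hC M)

/-- the scaled compressor `C̃(M) = (‖M‖/‖C M‖) • C M` satisfies both
contractive compressor conditions whenever `‖C M‖ > ‖M‖`. -/
theorem scaled_compressor_contractive {d : ℕ}
    (C : Matrix (Fin d) (Fin d) ℝ → Matrix (Fin d) (Fin d) ℝ)
    (δ : ℝ) (hδ0 : 0 ≤ δ) (hδ1 : δ ≤ 1)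
    (hC : ∀ M : Matrix (Fin d) (Fin d) ℝ, ‖C M - M‖ ^ 2 ≤ (1 - δ) * ‖M‖ ^ 2)
    (M : Matrix (Fin d) (Fin d) ℝ) (hM : ‖M‖ < ‖C M‖) :
    ‖(‖M‖ / ‖C M‖) • C M‖ ≤ ‖M‖ ∧
      ‖(‖M‖ / ‖C M‖) • C M - M‖ ^ 2 ≤ (1 - δ) * ‖M‖ ^ 2 :=
  scaled_compressor_contractive_general C δ hC M hM
end

section
/- Let f : R^d → R be twice differentiable with H-Lipschitz Hessian (in spectral norm) and suppose ∇²f(x*) ⪰ μI with μ > 0 at a point x* satisfying ∇f(x*) = 0. Then the Newton Star iteration x^{k+1} = x^k − [∇²f(x*)]^{-1} ∇f(x^k) satisfies ‖x^{k+1} − x*‖ ≤ (H/(2μ))‖x^k − x*‖² for all k ≥ 0 and any x^0 ∈ R^d. -/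
/-!
Write `A = ∇²f(x⋆)` and `x⁺ = x - A⁻¹ ∇f(x)`. Applying `A` to the error gives
`A (x⁺ - x⋆) = -(∇f(x) - ∇f(x⋆) - A (x - x⋆))`, and `A ⪰ μI` yields `μ ‖v‖ ≤ ‖A v‖`. Hence
`μ ‖x⁺ - x⋆‖` is at most the linearization error of `∇f` at `x⋆`, which the Lipschitz Hessian
bounds by `H / 2 ‖x - x⋆‖²`.
-/

open scoped RealInnerProductSpace

open Set

/- `t ↦ g (x + t • v) - g x - t • A x v` has derivative `(A (x + t • v) - A x) v`, of norm at
most `H t ‖v‖²`, so it is fenced in by `t ↦ H / 2 * t ^ 2 * ‖v‖ ^ 2` on `[0, 1]`. -/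
theorem norm_sub_sub_fderiv_le_of_lipschitz_fderiv {E F : Type*}
    [NormedAddCommGroup E] [NormedSpace ℝ E] [NormedAddCommGroup F] [NormedSpace ℝ F]
    {g : E → F} {A : E → E →L[ℝ] F} {H : ℝ}
    (hg : ∀ x, HasFDerivAt g (A x) x) (hA : ∀ x y, ‖A x - A y‖ ≤ H * ‖x - y‖) (x y : E) :
    ‖g y - g x - A x (y - x)‖ ≤ H / 2 * ‖y - x‖ ^ 2 := by
  set v := y - x
  let φ : ℝ → F := fun t => g (x + t • v) - g x - t • A x v
  have hφ : ∀ t, HasDerivAt φ (A (x + t • v) v - A x v) t := by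
    intro t
    have hline : HasDerivAt (fun t : ℝ => x + t • v) v t := by
      simpa using ((hasDerivAt_id t).smul_const v).const_add x
    exact ((((hg _).comp_hasDerivAt t hline).sub_const (g x)).sub
      ((hasDerivAt_id t).smul_const (A x v))).congr_deriv (by rw [one_smul])
  have hB : ∀ t : ℝ, HasDerivAt (fun t => H / 2 * t ^ 2 * ‖v‖ ^ 2) (H * t * ‖v‖ ^ 2) t := by
    intro t
    exact (((hasDerivAt_pow 2 t).const_mul (H / 2)).mul_const (‖v‖ ^ 2)).congr_deriv
      (by push_cast; ring)
  have hderiv_le : ∀ t ∈ Ico (0 : ℝ) 1, ‖A (x + t • v) v - A x v‖ ≤ H * t * ‖v‖ ^ 2 := by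
    intro t ht
    calc ‖A (x + t • v) v - A x v‖ = ‖(A (x + t • v) - A x) v‖ := rfl
      _ ≤ ‖A (x + t • v) - A x‖ * ‖v‖ := ContinuousLinearMap.le_opNorm _ _
      _ ≤ H * ‖t • v‖ * ‖v‖ := by
          gcongr
          simpa using hA (x + t • v) x
      _ = H * t * ‖v‖ ^ 2 := by rw [norm_smul, Real.norm_of_nonneg ht.1]; ring
  have hfence := image_norm_le_of_norm_deriv_right_le_deriv_boundary
    (fun t _ => (hφ t).continuousAt.continuousWithinAt) (fun t _ => (hφ t).hasDerivWithinAt)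
    (by simp [φ]) hB hderiv_le (right_mem_Icc.2 zero_le_one)
  simpa [φ, v] using hfence

theorem mul_norm_le_norm_apply_of_coercive {E : Type*}
    [NormedAddCommGroup E] [InnerProductSpace ℝ E] {A : E →L[ℝ] E} {μ : ℝ}
    (hA : ∀ v, μ * ‖v‖ ^ 2 ≤ ⟪A v, v⟫) (v : E) : μ * ‖v‖ ≤ ‖A v‖ := by
  rcases (norm_nonneg v).eq_or_lt with hv | hv
  · simp [← hv]
  · refine le_of_mul_le_mul_right ?_ hv
    calc μ * ‖v‖ * ‖v‖ = μ * ‖v‖ ^ 2 := by ring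
      _ ≤ ⟪A v, v⟫ := hA v
      _ ≤ ‖A v‖ * ‖v‖ := real_inner_le_norm _ _

theorem mul_norm_newtonStar_step_sub_le {E : Type*}
    [NormedAddCommGroup E] [InnerProductSpace ℝ E] {g : E → E} {A Ainv : E →L[ℝ] E} {μ : ℝ}
    (hA : ∀ v, μ * ‖v‖ ^ 2 ≤ ⟪A v, v⟫) (hAinv : A.comp Ainv = ContinuousLinearMap.id ℝ E)
    {xstar : E} (hstar : g xstar = 0) (x : E) :
    μ * ‖x - Ainv (g x) - xstar‖ ≤ ‖g x - g xstar - A (x - xstar)‖ := by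
  have hA_step : A (x - Ainv (g x) - xstar) = -(g x - g xstar - A (x - xstar)) := by
    have hright : A (Ainv (g x)) = g x := congrArg (· (g x)) hAinv
    simp only [map_sub, hright, hstar]
    abel
  simpa only [hA_step, norm_neg] using
    mul_norm_le_norm_apply_of_coercive hA (x - Ainv (g x) - xstar)

theorem newton_star_quadratic_rate_general {d : ℕ}
    (g : EuclideanSpace ℝ (Fin d) → EuclideanSpace ℝ (Fin d))
    (Hess : EuclideanSpace ℝ (Fin d) →
      (EuclideanSpace ℝ (Fin d) →L[ℝ] EuclideanSpace ℝ (Fin d)))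
    (H μ : ℝ) (hμ : 0 < μ) (xstar : EuclideanSpace ℝ (Fin d))
    (hHess : ∀ x, HasFDerivAt g (Hess x) x)
    (hLip : ∀ x y, ‖Hess x - Hess y‖ ≤ H * ‖x - y‖)
    (hpos : ∀ v, μ * ‖v‖ ^ 2 ≤ ⟪Hess xstar v, v⟫)
    (hstar : g xstar = 0)
    (Hinv : EuclideanSpace ℝ (Fin d) →L[ℝ] EuclideanSpace ℝ (Fin d))
    (hinv2 : (Hess xstar).comp Hinv = ContinuousLinearMap.id ℝ _)
    (x : ℕ → EuclideanSpace ℝ (Fin d))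
    (hiter : ∀ k, x (k + 1) = x k - Hinv (g (x k))) :
    ∀ k, ‖x (k + 1) - xstar‖ ≤ H / (2 * μ) * ‖x k - xstar‖ ^ 2 := by
  intro k
  have hstep := mul_norm_newtonStar_step_sub_le hpos hinv2 hstar (x k)
  have htaylor := norm_sub_sub_fderiv_le_of_lipschitz_fderiv hHess hLip xstar (x k)
  rw [← hiter k] at hstep
  rw [div_mul_eq_mul_div, le_div_iff₀ (by positivity)]
  linarith

/-- local quadratic convergence of Newton Star,
`x^{k+1} = x^k − [∇²f(x*)]⁻¹ ∇f(x^k)`, for a twice differentiable `f` with `H`-Lipschitz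
Hessian (in operator norm) and `∇²f(x*) ⪰ μI`, `∇f(x*) = 0`. -/
theorem newton_star_quadratic_rate {d : ℕ}
    (f : EuclideanSpace ℝ (Fin d) → ℝ)
    (g : EuclideanSpace ℝ (Fin d) → EuclideanSpace ℝ (Fin d))
    (Hess : EuclideanSpace ℝ (Fin d) →
      (EuclideanSpace ℝ (Fin d) →L[ℝ] EuclideanSpace ℝ (Fin d)))
    (H μ : ℝ) (hμ : 0 < μ) (xstar : EuclideanSpace ℝ (Fin d))
    (hgrad : ∀ x, HasGradientAt f (g x) x)
    (hHess : ∀ x, HasFDerivAt g (Hess x) x)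
    (hLip : ∀ x y, ‖Hess x - Hess y‖ ≤ H * ‖x - y‖)
    (hpos : ∀ v, μ * ‖v‖ ^ 2 ≤ ⟪Hess xstar v, v⟫)
    (hstar : g xstar = 0)
    (Hinv : EuclideanSpace ℝ (Fin d) →L[ℝ] EuclideanSpace ℝ (Fin d))
    (hinv1 : Hinv.comp (Hess xstar) = ContinuousLinearMap.id ℝ _)
    (hinv2 : (Hess xstar).comp Hinv = ContinuousLinearMap.id ℝ _)
    (x : ℕ → EuclideanSpace ℝ (Fin d))
    (hiter : ∀ k, x (k + 1) = x k - Hinv (g (x k))) :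
    ∀ k, ‖x (k + 1) - xstar‖ ≤ H / (2 * μ) * ‖x k - xstar‖ ^ 2 :=
  newton_star_quadratic_rate_general g Hess H μ hμ xstar hHess hLip hpos hstar Hinv hinv2 x hiter
end

section
/- Let f : R^d → R be twice differentiable with H-Lipschitz Hessian in spectral norm, with minimizer x* where ∇f(x*) = 0 and ∇²f(x*) ⪰ μI, μ > 0. Let H^k ∈ R^{d×d} and let [H^k]_μ denote the projection of H^k onto the set of symmetric matrices M with M ⪰ μI (so [H^k]_μ ⪰ μI). Then the iterate x^{k+1} = x^k − [H^k]_μ^{-1} ∇f(x^k) satisfies ‖x^{k+1} − x*‖² ≤ (2/μ²)‖x^k − x*‖² (‖H^k − ∇²f(x*)‖² + (H²/4)‖x^k − x*‖²). -/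
open scoped RealInnerProductSpace

/-!
Write `e = xₖ - x*` and `A = ∇²f(x*)`. Since `∇f(x*) = 0`, the new error satisfies
`P (xₖ₊₁ - x*) = (P - A) e - (∇f(xₖ) - ∇f(x*) - A e)`. Coercivity of `P` bounds the left side
below by `μ ‖xₖ₊₁ - x*‖`; the right side is at most `‖Hₖ - A‖ ‖e‖ + (H/2) ‖e‖²` by the
contraction property of the projection and the Lipschitz-Hessian Taylor bound. Squaring with
`(a + b)² ≤ 2 (a² + b²)` gives the claim.
-/

section Taylor

variable {E F : Type*} [NormedAddCommGroup E] [NormedSpace ℝ E]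
  [NormedAddCommGroup F] [NormedSpace ℝ F]

theorem norm_sub_sub_fderiv_apply_le_of_lipschitz {g : E → F} {g' : E → E →L[ℝ] F} {H : ℝ}
    (hg : ∀ x, HasFDerivAt g (g' x) x) (hLip : ∀ x y, ‖g' x - g' y‖ ≤ H * ‖x - y‖) (x y : E) :
    ‖g x - g y - g' y (x - y)‖ ≤ H / 2 * ‖x - y‖ ^ 2 := by
  set v := x - y
  let φ : ℝ → F := fun t => g (y + t • v) - g y - t • g' y v
  have hφ : ∀ t : ℝ, HasDerivAt φ ((g' (y + t • v) - g' y) v) t := by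
    intro t
    have hline : HasDerivAt (fun t : ℝ => y + t • v) v t := by
      simpa using ((hasDerivAt_id t).smul_const v).const_add y
    have hlin : HasDerivAt (fun t : ℝ => t • g' y v) (g' y v) t := by
      simpa using (hasDerivAt_id t).smul_const (g' y v)
    simpa [φ, Pi.sub_def] using (((hg _).comp_hasDerivAt t hline).sub_const (g y)).sub hlin
  have hbound : ∀ t ∈ Set.Ico (0 : ℝ) 1, ‖(g' (y + t • v) - g' y) v‖ ≤ H * ‖v‖ ^ 2 * t := by
    intro t ht
    calc ‖(g' (y + t • v) - g' y) v‖ ≤ ‖g' (y + t • v) - g' y‖ * ‖v‖ :=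
          ContinuousLinearMap.le_opNorm _ _
      _ ≤ H * ‖t • v‖ * ‖v‖ := by
          gcongr
          simpa using hLip (y + t • v) y
      _ = H * ‖v‖ ^ 2 * t := by
          rw [norm_smul, Real.norm_of_nonneg ht.1]
          ring
  have hB : ∀ t : ℝ, HasDerivAt (fun t => H * ‖v‖ ^ 2 * t ^ 2 / 2) (H * ‖v‖ ^ 2 * t) t := by
    intro t
    exact (((hasDerivAt_pow 2 t).const_mul (H * ‖v‖ ^ 2)).div_const 2).congr_deriv (by ring)
  have hφ1 := image_norm_le_of_norm_deriv_right_le_deriv_boundary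
    (fun t _ => (hφ t).continuousAt.continuousWithinAt) (fun t _ => (hφ t).hasDerivWithinAt)
    (by simp [φ]) hB hbound (Set.right_mem_Icc.mpr zero_le_one)
  have hyv : y + v = x := add_sub_cancel y x
  simpa [φ, hyv] using hφ1.trans_eq (by ring : H * ‖v‖ ^ 2 * 1 ^ 2 / 2 = H / 2 * ‖v‖ ^ 2)

end Taylor

section Newton

variable {E : Type*} [NormedAddCommGroup E] [InnerProductSpace ℝ E]

theorem mul_norm_le_norm_apply_of_coercive_s8 {T : E →L[ℝ] E} {μ : ℝ}
    (hT : ∀ v, μ * ‖v‖ ^ 2 ≤ ⟪T v, v⟫) (v : E) : μ * ‖v‖ ≤ ‖T v‖ := by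
  rcases (norm_nonneg v).eq_or_lt with hv | hv
  · simp [← hv]
  · refine le_of_mul_le_mul_right ?_ hv
    calc μ * ‖v‖ * ‖v‖ = μ * ‖v‖ ^ 2 := by ring
      _ ≤ ⟪T v, v⟫ := hT v
      _ ≤ ‖T v‖ * ‖v‖ := real_inner_le_norm _ _

theorem mul_norm_newtonStep_sub_le {g : E → E} {g' : E → E →L[ℝ] E} {H μ : ℝ}
    (hg : ∀ x, HasFDerivAt g (g' x) x) (hLip : ∀ x y, ‖g' x - g' y‖ ≤ H * ‖x - y‖)
    {xstar : E} (hstar : g xstar = 0) {P Pinv : E →L[ℝ] E}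
    (hP : ∀ v, μ * ‖v‖ ^ 2 ≤ ⟪P v, v⟫) (hPinv : P.comp Pinv = ContinuousLinearMap.id ℝ E)
    (x : E) :
    μ * ‖x - Pinv (g x) - xstar‖ ≤
      ‖P - g' xstar‖ * ‖x - xstar‖ + H / 2 * ‖x - xstar‖ ^ 2 := by
  have hPPinv : P (Pinv (g x)) = g x := congrArg (fun T : E →L[ℝ] E => T (g x)) hPinv
  have herror : P (x - Pinv (g x) - xstar) =
      (P - g' xstar) (x - xstar) - (g x - g xstar - g' xstar (x - xstar)) := by
    simp only [map_sub, hPPinv, sub_apply, hstar]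
    abel
  calc μ * ‖x - Pinv (g x) - xstar‖ ≤ ‖P (x - Pinv (g x) - xstar)‖ :=
        mul_norm_le_norm_apply_of_coercive_s8 hP _
    _ ≤ ‖(P - g' xstar) (x - xstar)‖ + ‖g x - g xstar - g' xstar (x - xstar)‖ := by
        rw [herror]
        exact norm_sub_le _ _
    _ ≤ ‖P - g' xstar‖ * ‖x - xstar‖ + H / 2 * ‖x - xstar‖ ^ 2 :=
        add_le_add (ContinuousLinearMap.le_opNorm _ _)
          (norm_sub_sub_fderiv_apply_le_of_lipschitz hg hLip x xstar)

end Newton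

/-- The projection `P = [H^k]_μ` is encoded by the two properties used: `P ⪰ μI` and
`‖P − ∇²f(x*)‖ ≤ ‖H^k − ∇²f(x*)‖`. -/
theorem fednl_option1_one_step_general {d : ℕ}
    (g : EuclideanSpace ℝ (Fin d) → EuclideanSpace ℝ (Fin d))
    (Hess : EuclideanSpace ℝ (Fin d) →
      (EuclideanSpace ℝ (Fin d) →L[ℝ] EuclideanSpace ℝ (Fin d)))
    (H μ : ℝ) (hμ : 0 < μ) (xstar : EuclideanSpace ℝ (Fin d))
    (hHess : ∀ x, HasFDerivAt g (Hess x) x)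
    (hLip : ∀ x y, ‖Hess x - Hess y‖ ≤ H * ‖x - y‖)
    (hstar : g xstar = 0)
    (Hk P : EuclideanSpace ℝ (Fin d) →L[ℝ] EuclideanSpace ℝ (Fin d))
    (hPpos : ∀ v, μ * ‖v‖ ^ 2 ≤ ⟪P v, v⟫)
    (hPproj : ‖P - Hess xstar‖ ≤ ‖Hk - Hess xstar‖)
    (Pinv : EuclideanSpace ℝ (Fin d) →L[ℝ] EuclideanSpace ℝ (Fin d))
    (hinv2 : P.comp Pinv = ContinuousLinearMap.id ℝ _)
    (xk xnext : EuclideanSpace ℝ (Fin d))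
    (hiter : xnext = xk - Pinv (g xk)) :
    ‖xnext - xstar‖ ^ 2 ≤ 2 / μ ^ 2 * ‖xk - xstar‖ ^ 2 *
      (‖Hk - Hess xstar‖ ^ 2 + H ^ 2 / 4 * ‖xk - xstar‖ ^ 2) := by
  set e := ‖xk - xstar‖
  have hstep : μ * ‖xnext - xstar‖ ≤ ‖Hk - Hess xstar‖ * e + H / 2 * e ^ 2 := by
    rw [hiter]
    refine (mul_norm_newtonStep_sub_le hHess hLip hstar hPpos hinv2 xk).trans ?_
    gcongr
  have hsq : (μ * ‖xnext - xstar‖) ^ 2 ≤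
      2 * e ^ 2 * (‖Hk - Hess xstar‖ ^ 2 + H ^ 2 / 4 * e ^ 2) :=
    calc (μ * ‖xnext - xstar‖) ^ 2 ≤ (‖Hk - Hess xstar‖ * e + H / 2 * e ^ 2) ^ 2 := by
          gcongr
      _ ≤ 2 * ((‖Hk - Hess xstar‖ * e) ^ 2 + (H / 2 * e ^ 2) ^ 2) := add_sq_le
      _ = 2 * e ^ 2 * (‖Hk - Hess xstar‖ ^ 2 + H ^ 2 / 4 * e ^ 2) := by ring
  rw [mul_pow, ← le_div_iff₀' (by positivity)] at hsq
  calc ‖xnext - xstar‖ ^ 2 ≤ _ := hsq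
    _ = _ := by ring

/-- one step of FedNL (Option 1) with the projected Hessian estimate
`P = [H^k]_μ`.  The projection is encoded by its defining properties: `P ⪰ μI` and
`‖P − ∇²f(x*)‖ ≤ ‖H^k − ∇²f(x*)‖` (the projection is a contraction towards any symmetric
matrix `⪰ μI`). -/
theorem fednl_option1_one_step {d : ℕ}
    (f : EuclideanSpace ℝ (Fin d) → ℝ)
    (g : EuclideanSpace ℝ (Fin d) → EuclideanSpace ℝ (Fin d))
    (Hess : EuclideanSpace ℝ (Fin d) →
      (EuclideanSpace ℝ (Fin d) →L[ℝ] EuclideanSpace ℝ (Fin d)))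
    (H μ : ℝ) (hμ : 0 < μ) (xstar : EuclideanSpace ℝ (Fin d))
    (hgrad : ∀ x, HasGradientAt f (g x) x)
    (hHess : ∀ x, HasFDerivAt g (Hess x) x)
    (hLip : ∀ x y, ‖Hess x - Hess y‖ ≤ H * ‖x - y‖)
    (hpos : ∀ v, μ * ‖v‖ ^ 2 ≤ ⟪Hess xstar v, v⟫)
    (hstar : g xstar = 0)
    (Hk P : EuclideanSpace ℝ (Fin d) →L[ℝ] EuclideanSpace ℝ (Fin d))
    (hPpos : ∀ v, μ * ‖v‖ ^ 2 ≤ ⟪P v, v⟫)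
    (hPproj : ‖P - Hess xstar‖ ≤ ‖Hk - Hess xstar‖)
    (Pinv : EuclideanSpace ℝ (Fin d) →L[ℝ] EuclideanSpace ℝ (Fin d))
    (hinv1 : Pinv.comp P = ContinuousLinearMap.id ℝ _)
    (hinv2 : P.comp Pinv = ContinuousLinearMap.id ℝ _)
    (xk xnext : EuclideanSpace ℝ (Fin d))
    (hiter : xnext = xk - Pinv (g xk)) :
    ‖xnext - xstar‖ ^ 2 ≤ 2 / μ ^ 2 * ‖xk - xstar‖ ^ 2 *
      (‖Hk - Hess xstar‖ ^ 2 + H ^ 2 / 4 * ‖xk - xstar‖ ^ 2) :=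
  fednl_option1_one_step_general g Hess H μ hμ xstar hHess hLip hstar Hk P hPpos hPproj Pinv hinv2
    xk xnext hiter
end

section
/- Let f = (1/n)Σ f_i where each f_i has both H-Lipschitz Hessian (spectral norm) and L_F-Lipschitz Hessian (Frobenius norm), f is μ-strongly convex, and ∇f(x*) = 0. For matrices H_i^k set l_i^k := ‖H_i^k − ∇²f_i(x^k)‖_F, H^k := (1/n)Σ H_i^k, l^k := (1/n)Σ l_i^k, and suppose H^k + l^k I ⪰ ∇²f(x^k) ⪰ μI. Then the iterate x^{k+1} = x^k − [H^k + l^k I]^{-1}∇f(x^k) satisfies ‖x^{k+1} − x*‖² ≤ (8/μ²)‖x^k − x*‖² H^k_err + ((H+2L_F)²/(2μ²))‖x^k − x*‖⁴, where H^k_err := (1/n)Σ_i ‖H_i^k − ∇²f_i(x*)‖_F². -/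
open scoped RealInnerProductSpace

attribute [local instance] Matrix.frobeniusNormedAddCommGroup Matrix.frobeniusNormedSpace

/-- A matrix viewed as a continuous linear map on Euclidean space; its operator norm
is the spectral norm of the matrix. -/
noncomputable def Matrix.toCLM {d : ℕ} (A : Matrix (Fin d) (Fin d) ℝ) :
    EuclideanSpace ℝ (Fin d) →L[ℝ] EuclideanSpace ℝ (Fin d) :=
  LinearMap.toContinuousLinearMap (Matrix.toEuclideanLin A)

/-! With `T = H^k + l^k I` and `B x = ∇²f(x)`, strong convexity and `T ⪰ B x^k` give
`μ ‖v‖ ≤ ‖T v‖`, while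
`T (x^{k+1} - x*) = (T - B x*) (x^k - x*) - (∇f(x^k) - ∇f(x*) - B x* (x^k - x*))`.
The Lipschitz Hessian bounds the second term by `H/2 ‖x^k - x*‖²`; since the spectral norm is at
most the Frobenius norm, `‖T - B x*‖ ≤ l* + l^k ≤ 2 l* + L_F ‖x^k - x*‖`, where `l*` is the mean
Frobenius error at `x*`. Squaring with `(a + b)² ≤ 2a² + 2b²` and `l*² ≤ H^k_err` gives the bound. -/

section Mean

variable {n : ℕ}

theorem norm_inv_natCast_smul_sum_le {E : Type*} [SeminormedAddCommGroup E] [NormedSpace ℝ E]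
    (x : Fin n → E) : ‖(n : ℝ)⁻¹ • ∑ i, x i‖ ≤ (n : ℝ)⁻¹ * ∑ i, ‖x i‖ := by
  rw [norm_smul, Real.norm_of_nonneg (by positivity)]
  gcongr
  exact norm_sum_le _ _

theorem inv_natCast_mul_sum_le_add (hn : 0 < n) {a b : Fin n → ℝ} {c : ℝ}
    (h : ∀ i, a i ≤ b i + c) : (n : ℝ)⁻¹ * ∑ i, a i ≤ (n : ℝ)⁻¹ * ∑ i, b i + c := by
  calc (n : ℝ)⁻¹ * ∑ i, a i ≤ (n : ℝ)⁻¹ * ∑ i, (b i + c) := by gcongr with i; exact h i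
    _ = (n : ℝ)⁻¹ * ∑ i, b i + c := by
      rw [Finset.sum_add_distrib, mul_add, Finset.sum_const, Finset.card_univ, Fintype.card_fin,
        nsmul_eq_mul, inv_mul_cancel_left₀ (by positivity)]

theorem sq_inv_natCast_mul_sum_le (a : Fin n → ℝ) :
    ((n : ℝ)⁻¹ * ∑ i, a i) ^ 2 ≤ (n : ℝ)⁻¹ * ∑ i, a i ^ 2 := by
  simpa [inv_mul_eq_div] using sum_div_card_sq_le_sum_sq_div_card (s := Finset.univ) (f := a)

theorem norm_inv_natCast_smul_sum_le_of_forall_le {E : Type*} [SeminormedAddCommGroup E]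
    [NormedSpace ℝ E] (hn : 0 < n) {x : Fin n → E} {c : ℝ} (h : ∀ i, ‖x i‖ ≤ c) :
    ‖(n : ℝ)⁻¹ • ∑ i, x i‖ ≤ c := by
  refine (norm_inv_natCast_smul_sum_le x).trans ?_
  simpa using inv_natCast_mul_sum_le_add hn (b := 0) (fun i => by simpa using h i)

theorem inv_natCast_mul_sum_norm_sub_le_add {E : Type*} [SeminormedAddCommGroup E] (hn : 0 < n)
    (a b c : Fin n → E) {δ : ℝ} (h : ∀ i, ‖b i - c i‖ ≤ δ) :
    (n : ℝ)⁻¹ * ∑ i, ‖a i - c i‖ ≤ (n : ℝ)⁻¹ * ∑ i, ‖a i - b i‖ + δ :=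
  inv_natCast_mul_sum_le_add hn fun i => (norm_sub_le_norm_sub_add_norm_sub _ _ _).trans (by
    gcongr; exact h i)

end Mean

theorem mul_norm_le_norm_of_mul_sq_le_inner {E : Type*} [NormedAddCommGroup E]
    [InnerProductSpace ℝ E] {μ : ℝ} {v w : E} (h : μ * ‖v‖ ^ 2 ≤ ⟪w, v⟫) :
    μ * ‖v‖ ≤ ‖w‖ := by
  rcases (norm_nonneg v).eq_or_lt with hv | hv
  · simp [← hv]
  · have := h.trans (real_inner_le_norm w v)
    nlinarith

theorem norm_image_sub_sub_fderiv_le_of_lipschitz {E F : Type*} [NormedAddCommGroup E]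
    [NormedSpace ℝ E] [NormedAddCommGroup F] [NormedSpace ℝ F] {g : E → F} {g' : E → E →L[ℝ] F}
    {C : ℝ} (hg : ∀ x, HasFDerivAt g (g' x) x) (hg' : ∀ x y, ‖g' x - g' y‖ ≤ C * ‖x - y‖)
    (x y : E) : ‖g y - g x - g' x (y - x)‖ ≤ C / 2 * ‖y - x‖ ^ 2 := by
  set u := y - x
  let φ : ℝ → F := fun t => g (x + t • u) - g x - t • g' x u
  have hφ : ∀ t, HasDerivAt φ (g' (x + t • u) u - g' x u) t := by
    intro t
    have hpath : HasDerivAt (fun s : ℝ => x + s • u) u t := by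
      simpa using ((hasDerivAt_id t).smul_const u).const_add x
    exact (((hg _).comp_hasDerivAt t hpath).sub_const (g x)).sub
      (by simpa using (hasDerivAt_id t).smul_const (g' x u))
  have hbound : ∀ t ∈ Set.Ico (0 : ℝ) 1,
      ‖g' (x + t • u) u - g' x u‖ ≤ C * ‖u‖ ^ 2 * t := by
    rintro t ⟨ht, -⟩
    calc ‖g' (x + t • u) u - g' x u‖ ≤ ‖g' (x + t • u) - g' x‖ * ‖u‖ :=
          (g' (x + t • u) - g' x).le_opNorm u
      _ ≤ C * ‖t • u‖ * ‖u‖ := by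
          gcongr
          simpa using hg' (x + t • u) x
      _ = C * ‖u‖ ^ 2 * t := by rw [norm_smul, Real.norm_of_nonneg ht]; ring
  have := image_norm_le_of_norm_deriv_right_le_deriv_boundary
    (fun t _ => (hφ t).continuousAt.continuousWithinAt) (fun t _ => (hφ t).hasDerivWithinAt)
    (B := fun t => C * ‖u‖ ^ 2 / 2 * t ^ 2) (by simp [φ])
    (fun t => ((hasDerivAt_pow 2 t).const_mul _).congr_deriv (by ring)) hbound
    (Set.right_mem_Icc.2 zero_le_one)
  simpa [φ, u, mul_div_right_comm] using this

theorem mul_norm_newton_step_sub_le {E : Type*} [NormedAddCommGroup E] [NormedSpace ℝ E]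
    {g : E → E} {g' : E → E →L[ℝ] E} {C μ : ℝ} (hg : ∀ x, HasFDerivAt g (g' x) x)
    (hg' : ∀ x y, ‖g' x - g' y‖ ≤ C * ‖x - y‖) {T S : E →L[ℝ] E}
    (hT : ∀ v, μ * ‖v‖ ≤ ‖T v‖) (hTS : T.comp S = ContinuousLinearMap.id ℝ E)
    {x xstar : E} (hstar : g xstar = 0) :
    μ * ‖x - S (g x) - xstar‖ ≤ ‖T - g' xstar‖ * ‖x - xstar‖ + C / 2 * ‖x - xstar‖ ^ 2 := by
  have hTS' : T (S (g x)) = g x := by simpa using congr($hTS (g x))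
  have hsplit : T (x - S (g x) - xstar) =
      (T - g' xstar) (x - xstar) - (g x - g xstar - g' xstar (x - xstar)) := by
    simp only [map_sub, hTS', hstar, FunLike.coe_sub, Pi.sub_apply]
    abel
  calc μ * ‖x - S (g x) - xstar‖ ≤ ‖T (x - S (g x) - xstar)‖ := hT _
    _ ≤ ‖(T - g' xstar) (x - xstar)‖ + ‖g x - g xstar - g' xstar (x - xstar)‖ := by
        rw [hsplit]; exact norm_sub_le _ _
    _ ≤ ‖T - g' xstar‖ * ‖x - xstar‖ + C / 2 * ‖x - xstar‖ ^ 2 := by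
        gcongr
        · exact (T - g' xstar).le_opNorm _
        · exact norm_image_sub_sub_fderiv_le_of_lipschitz hg hg' xstar x

theorem sq_le_of_mul_le_two_mul_add {μ e a r S K : ℝ} (hμ : 0 < μ) (he : 0 ≤ e)
    (haS : a ^ 2 ≤ S) (h : μ * e ≤ 2 * a * r + K / 2 * r ^ 2) :
    e ^ 2 ≤ 8 / μ ^ 2 * r ^ 2 * S + K ^ 2 / (2 * μ ^ 2) * r ^ 4 := by
  have hsq : (μ * e) ^ 2 ≤ 8 * S * r ^ 2 + K ^ 2 / 2 * r ^ 4 := by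
    nlinarith [pow_le_pow_left₀ (by positivity) h 2, sq_nonneg (2 * a * r - K / 2 * r ^ 2),
      mul_le_mul_of_nonneg_right haS (sq_nonneg r)]
  calc e ^ 2 = (μ * e) ^ 2 / μ ^ 2 := by field_simp
    _ ≤ (8 * S * r ^ 2 + K ^ 2 / 2 * r ^ 4) / μ ^ 2 := by gcongr
    _ = 8 / μ ^ 2 * r ^ 2 * S + K ^ 2 / (2 * μ ^ 2) * r ^ 4 := by field_simp

namespace Matrix

variable {d n : ℕ}

theorem toCLM_eq_toEuclideanCLM (A : Matrix (Fin d) (Fin d) ℝ) :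
    A.toCLM = toEuclideanCLM (𝕜 := ℝ) A := rfl

theorem norm_toCLM_apply_le (A : Matrix (Fin d) (Fin d) ℝ) (v : EuclideanSpace ℝ (Fin d)) :
    ‖A.toCLM v‖ ≤ ‖A‖ * ‖v‖ := by
  have h := frobenius_norm_mul A (replicateCol Unit (v : Fin d → ℝ))
  rwa [← replicateCol_mulVec, frobenius_norm_replicateCol, frobenius_norm_replicateCol] at h

theorem opNorm_toCLM_le (A : Matrix (Fin d) (Fin d) ℝ) : ‖A.toCLM‖ ≤ ‖A‖ :=
  ContinuousLinearMap.opNorm_le_bound _ (norm_nonneg A) A.norm_toCLM_apply_le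

theorem opNorm_toCLM_mean_sub_le (hn : 0 < n) {P Q : Fin n → Matrix (Fin d) (Fin d) ℝ} {c : ℝ}
    (h : ∀ i, ‖(P i).toCLM - (Q i).toCLM‖ ≤ c) :
    ‖((n : ℝ)⁻¹ • ∑ i, P i).toCLM - ((n : ℝ)⁻¹ • ∑ i, Q i).toCLM‖ ≤ c := by
  rw [toCLM_eq_toEuclideanCLM, toCLM_eq_toEuclideanCLM, ← map_sub, ← smul_sub,
    ← Finset.sum_sub_distrib, map_smul, map_sum]
  simp only [map_sub]
  exact norm_inv_natCast_smul_sum_le_of_forall_le hn h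

theorem opNorm_toCLM_mean_add_smul_one_sub_le (M N P : Fin n → Matrix (Fin d) (Fin d) ℝ) :
    ‖((n : ℝ)⁻¹ • ∑ i, M i + ((n : ℝ)⁻¹ * ∑ i, ‖M i - N i‖) • 1).toCLM -
        ((n : ℝ)⁻¹ • ∑ i, P i).toCLM‖ ≤
      (n : ℝ)⁻¹ * ∑ i, ‖M i - P i‖ + (n : ℝ)⁻¹ * ∑ i, ‖M i - N i‖ := by
  set l := (n : ℝ)⁻¹ * ∑ i, ‖M i - N i‖
  have hl : 0 ≤ l := by positivity
  have hsplit : ((n : ℝ)⁻¹ • ∑ i, M i + l • 1).toCLM - ((n : ℝ)⁻¹ • ∑ i, P i).toCLM =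
      ((n : ℝ)⁻¹ • ∑ i, (M i - P i)).toCLM + l • 1 := by
    simp only [toCLM_eq_toEuclideanCLM, map_add, map_smul, map_one, Finset.sum_sub_distrib,
      smul_sub, map_sub]
    abel
  rw [hsplit]
  refine (norm_add_le _ _).trans (add_le_add ?_ ?_)
  · exact (opNorm_toCLM_le _).trans (norm_inv_natCast_smul_sum_le _)
  · rw [norm_smul, Real.norm_of_nonneg hl]
    exact mul_le_of_le_one_right hl ContinuousLinearMap.norm_id_le

end Matrix

theorem fednl_option2_one_step_general {d n : ℕ} (hn : 0 < n)
    (g : EuclideanSpace ℝ (Fin d) → EuclideanSpace ℝ (Fin d))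
    (Hess : Fin n → EuclideanSpace ℝ (Fin d) → Matrix (Fin d) (Fin d) ℝ)
    (Hs LF μ : ℝ) (hμ : 0 < μ) (xstar : EuclideanSpace ℝ (Fin d))
    -- the Hessian of `f` is the average of the local Hessians
    (hHess : ∀ x, HasFDerivAt g (Matrix.toCLM ((n : ℝ)⁻¹ • ∑ i, Hess i x)) x)
    -- `μ`-strong convexity of `f`: `∇²f(x) ⪰ μ I`
    (hsc : ∀ x v, μ * ‖v‖ ^ 2 ≤ ⟪Matrix.toCLM ((n : ℝ)⁻¹ • ∑ i, Hess i x) v, v⟫)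
    -- each local Hessian is `Hs`-Lipschitz in the spectral norm
    (hLipS : ∀ i x y, ‖Matrix.toCLM (Hess i x) - Matrix.toCLM (Hess i y)‖ ≤ Hs * ‖x - y‖)
    -- each local Hessian is `LF`-Lipschitz in the Frobenius norm
    (hLipF : ∀ i x y, ‖Hess i x - Hess i y‖ ≤ LF * ‖x - y‖)
    (hstar : g xstar = 0)
    (Hk : Fin n → Matrix (Fin d) (Fin d) ℝ)
    (xk xnext : EuclideanSpace ℝ (Fin d))
    -- the corrected Hessian estimate `A = H^k + l^k I`
    (A : Matrix (Fin d) (Fin d) ℝ)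
    (hA : A = (n : ℝ)⁻¹ • ∑ i, Hk i +
      ((n : ℝ)⁻¹ * ∑ i, ‖Hk i - Hess i xk‖) • (1 : Matrix (Fin d) (Fin d) ℝ))
    -- `H^k + l^k I ⪰ ∇²f(x^k)`
    (hdom : ∀ v, ⟪Matrix.toCLM ((n : ℝ)⁻¹ • ∑ i, Hess i xk) v, v⟫ ≤ ⟪Matrix.toCLM A v, v⟫)
    (Ainv : EuclideanSpace ℝ (Fin d) →L[ℝ] EuclideanSpace ℝ (Fin d))
    (hinv2 : (Matrix.toCLM A).comp Ainv = ContinuousLinearMap.id ℝ _)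
    (hiter : xnext = xk - Ainv (g xk)) :
    ‖xnext - xstar‖ ^ 2 ≤
      8 / μ ^ 2 * ‖xk - xstar‖ ^ 2 * ((n : ℝ)⁻¹ * ∑ i, ‖Hk i - Hess i xstar‖ ^ 2) +
        (Hs + 2 * LF) ^ 2 / (2 * μ ^ 2) * ‖xk - xstar‖ ^ 4 := by
  set r := ‖xk - xstar‖
  set lstar := (n : ℝ)⁻¹ * ∑ i, ‖Hk i - Hess i xstar‖
  have hstep := mul_norm_newton_step_sub_le hHess
    (fun z w => Matrix.opNorm_toCLM_mean_sub_le hn (hLipS · z w))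
    (fun v => mul_norm_le_norm_of_mul_sq_le_inner ((hsc xk v).trans (hdom v))) hinv2
    (x := xk) hstar
  have hl : (n : ℝ)⁻¹ * ∑ i, ‖Hk i - Hess i xk‖ ≤ lstar + LF * r :=
    inv_natCast_mul_sum_norm_sub_le_add hn Hk (Hess · xstar) (Hess · xk) fun i => by
      simpa [r, norm_sub_rev] using hLipF i xstar xk
  have hA_err : ‖Matrix.toCLM A - Matrix.toCLM ((n : ℝ)⁻¹ • ∑ i, Hess i xstar)‖ ≤
      2 * lstar + LF * r := by
    rw [hA]
    linarith [Matrix.opNorm_toCLM_mean_add_smul_one_sub_le Hk (Hess · xk) (Hess · xstar)]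
  rw [hiter]
  refine sq_le_of_mul_le_two_mul_add hμ (norm_nonneg _)
    (sq_inv_natCast_mul_sum_le fun i => ‖Hk i - Hess i xstar‖) (hstep.trans ?_)
  nlinarith [mul_le_mul_of_nonneg_right hA_err (norm_nonneg (xk - xstar))]

/-- one step of FedNL (Option 2),
`x^{k+1} = x^k − [H^k + l^k I]⁻¹ ∇f(x^k)`. -/
theorem fednl_option2_one_step {d n : ℕ} (hn : 0 < n)
    (f : EuclideanSpace ℝ (Fin d) → ℝ)
    (g : EuclideanSpace ℝ (Fin d) → EuclideanSpace ℝ (Fin d))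
    (Hess : Fin n → EuclideanSpace ℝ (Fin d) → Matrix (Fin d) (Fin d) ℝ)
    (Hs LF μ : ℝ) (hμ : 0 < μ) (xstar : EuclideanSpace ℝ (Fin d))
    (hgrad : ∀ x, HasGradientAt f (g x) x)
    -- the Hessian of `f` is the average of the local Hessians
    (hHess : ∀ x, HasFDerivAt g (Matrix.toCLM ((n : ℝ)⁻¹ • ∑ i, Hess i x)) x)
    -- `μ`-strong convexity of `f`: `∇²f(x) ⪰ μ I`
    (hsc : ∀ x v, μ * ‖v‖ ^ 2 ≤ ⟪Matrix.toCLM ((n : ℝ)⁻¹ • ∑ i, Hess i x) v, v⟫)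
    -- each local Hessian is `Hs`-Lipschitz in the spectral norm
    (hLipS : ∀ i x y, ‖Matrix.toCLM (Hess i x) - Matrix.toCLM (Hess i y)‖ ≤ Hs * ‖x - y‖)
    -- each local Hessian is `LF`-Lipschitz in the Frobenius norm
    (hLipF : ∀ i x y, ‖Hess i x - Hess i y‖ ≤ LF * ‖x - y‖)
    (hstar : g xstar = 0)
    (Hk : Fin n → Matrix (Fin d) (Fin d) ℝ)
    (xk xnext : EuclideanSpace ℝ (Fin d))
    -- the corrected Hessian estimate `A = H^k + l^k I`
    (A : Matrix (Fin d) (Fin d) ℝ)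
    (hA : A = (n : ℝ)⁻¹ • ∑ i, Hk i +
      ((n : ℝ)⁻¹ * ∑ i, ‖Hk i - Hess i xk‖) • (1 : Matrix (Fin d) (Fin d) ℝ))
    -- `H^k + l^k I ⪰ ∇²f(x^k)`
    (hdom : ∀ v, ⟪Matrix.toCLM ((n : ℝ)⁻¹ • ∑ i, Hess i xk) v, v⟫ ≤ ⟪Matrix.toCLM A v, v⟫)
    (Ainv : EuclideanSpace ℝ (Fin d) →L[ℝ] EuclideanSpace ℝ (Fin d))
    (hinv1 : Ainv.comp (Matrix.toCLM A) = ContinuousLinearMap.id ℝ _)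
    (hinv2 : (Matrix.toCLM A).comp Ainv = ContinuousLinearMap.id ℝ _)
    (hiter : xnext = xk - Ainv (g xk)) :
    ‖xnext - xstar‖ ^ 2 ≤
      8 / μ ^ 2 * ‖xk - xstar‖ ^ 2 * ((n : ℝ)⁻¹ * ∑ i, ‖Hk i - Hess i xstar‖ ^ 2) +
        (Hs + 2 * LF) ^ 2 / (2 * μ ^ 2) * ‖xk - xstar‖ ^ 4 :=
  fednl_option2_one_step_general hn g Hess Hs LF μ hμ xstar hHess hsc hLipS hLipF hstar Hk xk xnext
    A hA hdom Ainv hinv2 hiter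
end

section
/- Suppose nonnegative reals r_k satisfy r_{k+1} ≤ (C/μ²) r_k h_k + (D/(2μ²)) r_k², where C, D, μ > 0, and assume r_0 ≤ μ²/(2D) and h_k ≤ μ²/(4C) for all k ≥ 0. Then r_k ≤ μ²/(2D) for all k and moreover r_{k+1} ≤ (1/2) r_k, so r_k ≤ (1/2)^k r_0 for all k ≥ 0. -/
/-- the local linear convergence recursion of FedNL. -/
theorem fednl_local_linear_recursion (r h : ℕ → ℝ) (C D μ : ℝ)
    (hC : 0 < C) (hD : 0 < D) (hμ : 0 < μ)
    (hr0 : ∀ k, 0 ≤ r k) (hh0 : ∀ k, 0 ≤ h k)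
    (hrec : ∀ k, r (k + 1) ≤ C / μ ^ 2 * (r k * h k) + D / (2 * μ ^ 2) * r k ^ 2)
    (hinit : r 0 ≤ μ ^ 2 / (2 * D)) (hH : ∀ k, h k ≤ μ ^ 2 / (4 * C)) :
    (∀ k, r k ≤ μ ^ 2 / (2 * D)) ∧ (∀ k, r (k + 1) ≤ 1 / 2 * r k) ∧
      ∀ k, r k ≤ (1 / 2) ^ k * r 0 := by
  have hμ2 : (0:ℝ) < μ ^ 2 := by positivity
  have key : ∀ k, r k ≤ μ ^ 2 / (2 * D) → r (k + 1) ≤ 1 / 2 * r k := by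
    intro k hk
    have h1 : C / μ ^ 2 * (r k * h k) ≤ 1 / 4 * r k := by
      have := mul_le_mul_of_nonneg_left (hH k) (hr0 k)
      calc C / μ ^ 2 * (r k * h k) ≤ C / μ ^ 2 * (r k * (μ ^ 2 / (4 * C))) := by
            apply mul_le_mul_of_nonneg_left this; positivity
        _ = 1 / 4 * r k := by field_simp
    have h2 : D / (2 * μ ^ 2) * r k ^ 2 ≤ 1 / 4 * r k := by
      have := mul_le_mul_of_nonneg_left hk (hr0 k)
      calc D / (2 * μ ^ 2) * r k ^ 2 = D / (2 * μ ^ 2) * (r k * r k) := by ring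
        _ ≤ D / (2 * μ ^ 2) * (r k * (μ ^ 2 / (2 * D))) := by
            apply mul_le_mul_of_nonneg_left this; positivity
        _ = 1 / 4 * r k := by field_simp; ring
    calc r (k + 1) ≤ C / μ ^ 2 * (r k * h k) + D / (2 * μ ^ 2) * r k ^ 2 := hrec k
      _ ≤ 1 / 4 * r k + 1 / 4 * r k := add_le_add h1 h2
      _ = 1 / 2 * r k := by ring
  have bdd : ∀ k, r k ≤ μ ^ 2 / (2 * D) := by
    intro k
    induction k with
    | zero => exact hinit
    | succ n ih =>
      calc r (n + 1) ≤ 1 / 2 * r n := key n ih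
        _ ≤ r n := by linarith [hr0 n]
        _ ≤ _ := ih
  have half : ∀ k, r (k + 1) ≤ 1 / 2 * r k := fun k => key k (bdd k)
  refine ⟨bdd, half, ?_⟩
  intro k
  induction k with
  | zero => simp
  | succ n ih =>
    calc r (n + 1) ≤ 1 / 2 * r n := half n
      _ ≤ 1 / 2 * ((1 / 2) ^ n * r 0) := by linarith
      _ = (1 / 2) ^ (n + 1) * r 0 := by ring
end

section
/- Let f : R^d → R be μ-strongly convex and L-smooth, with minimizer x*. Suppose at iteration k we are given a symmetric matrix G ⪰ μI with ‖G‖ ≤ max{L̃, μ} for some L̃ > 0, and set x^{k+1} = x^k − (1/κ) G^{-1}∇f(x^k) with κ := L/μ. Then f(x^{k+1}) − f(x*) ≤ (1 − (μ/L)·min{μ/L̃, 1}) (f(x^k) − f(x*)). -/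
/-!
With `p = G⁻¹ ∇f(xₖ)`, the bound `G ⪰ μI` gives `μ‖p‖² ≤ ⟪∇f(xₖ), p⟫`, so by the descent lemma
of an `L`-smooth function the step `(μ/L) p` decreases `f` by at least `(μ/2L) ⟪∇f(xₖ), p⟫`.
Since `0 ⪯ G` and `‖G‖ ≤ M := max L̃ μ`, we have `G² ⪯ M G`, i.e. `‖∇f(xₖ)‖² ≤ M ⟪∇f(xₖ), p⟫`,
and strong convexity gives the Polyak–Łojasiewicz inequality `2μ (f(xₖ) - f(x*)) ≤ ‖∇f(xₖ)‖²`.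
Hence the decrease is at least `(μ/L)(μ/M)(f(xₖ) - f(x*))`, and `μ/M = min (μ/L̃) 1`.
-/

open Set
open scoped RealInnerProductSpace

namespace ContinuousLinearMap

variable {E : Type*} [NormedAddCommGroup E] [InnerProductSpace ℝ E] {T : E →L[ℝ] E}

theorem IsPositive.inner_apply_sq_le (hT : T.IsPositive) (x y : E) :
    ⟪T x, y⟫ ^ 2 ≤ ⟪T x, x⟫ * ⟪T y, y⟫ := by
  have hquad (t : ℝ) : 0 ≤ ⟪T y, y⟫ * (t * t) + 2 * ⟪T x, y⟫ * t + ⟪T x, x⟫ := by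
    have h := hT.inner_nonneg_left (x + t • y)
    have hsymm : ⟪T y, x⟫ = ⟪T x, y⟫ := by rw [hT.inner_left_eq_inner_right, real_inner_comm]
    simp only [map_add, map_smul, inner_add_left, inner_add_right, real_inner_smul_left,
      real_inner_smul_right, hsymm] at h
    linarith
  have := discrim_le_zero hquad
  rw [discrim] at this
  linarith

theorem IsPositive.norm_apply_sq_le (hT : T.IsPositive) (x : E) :
    ‖T x‖ ^ 2 ≤ ‖T‖ * ⟪T x, x⟫ := by
  have hx := hT.inner_nonneg_left x
  rcases (sq_nonneg ‖T x‖).eq_or_lt with h0 | hpos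
  · rw [← h0]; positivity
  have hTTx : ⟪T (T x), T x⟫ ≤ ‖T‖ * ‖T x‖ ^ 2 := by
    calc ⟪T (T x), T x⟫ ≤ ‖T (T x)‖ * ‖T x‖ := real_inner_le_norm _ _
      _ ≤ ‖T‖ * ‖T x‖ * ‖T x‖ := by gcongr; exact T.le_opNorm _
      _ = ‖T‖ * ‖T x‖ ^ 2 := by ring
  have hcs := hT.inner_apply_sq_le x (T x)
  rw [real_inner_self_eq_norm_sq] at hcs
  have hquartic : ‖T x‖ ^ 2 * ‖T x‖ ^ 2 ≤ ‖T‖ * ⟪T x, x⟫ * ‖T x‖ ^ 2 := by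
    nlinarith [mul_le_mul_of_nonneg_left hTTx hx]
  exact le_of_mul_le_mul_right hquartic hpos

end ContinuousLinearMap

section
variable {E : Type*} [NormedAddCommGroup E] [NormedSpace ℝ E]

theorem ConvexOn.add_fderiv_sub_le {φ : E → ℝ} {φ' : E →L[ℝ] ℝ} {s : Set E} {x y : E}
    (hφ : ConvexOn ℝ s φ) (hx : x ∈ s) (hy : y ∈ s) (hφ' : HasFDerivAt φ φ' x) :
    φ x + φ' (y - x) ≤ φ y := by
  set ℓ : ℝ →ᵃ[ℝ] E := AffineMap.lineMap x y
  have hd : HasDerivAt (φ ∘ ℓ) (φ' (y - x)) 0 := by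
    rw [← AffineMap.lineMap_apply_zero (k := ℝ) x y] at hφ'
    exact hφ'.comp_hasDerivAt 0 AffineMap.hasDerivAt_lineMap
  have := (hφ.comp_affineMap ℓ).le_slope_of_hasDerivAt (x := 0) (y := 1)
    (by simpa [ℓ]) (by simpa [ℓ]) zero_lt_one hd
  simp only [slope, ℓ, Function.comp_apply, AffineMap.lineMap_apply_zero,
    AffineMap.lineMap_apply_one, vsub_eq_sub, sub_zero, inv_one, smul_eq_mul, one_mul] at this
  linarith

end

section

variable {E : Type*} [NormedAddCommGroup E] [InnerProductSpace ℝ E] [CompleteSpace E]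

theorem StrongConvexOn.add_inner_add_sq_le {f : E → ℝ} {s : Set E} {m : ℝ} {x y g' : E}
    (hf : StrongConvexOn s m f) (hx : x ∈ s) (hy : y ∈ s) (hg : HasGradientAt f g' x) :
    f x + ⟪g', y - x⟫ + m / 2 * ‖y - x‖ ^ 2 ≤ f y := by
  have hφ' : HasFDerivAt (fun z => f z - m / 2 * ‖z‖ ^ 2)
      (InnerProductSpace.toDual ℝ E g' - (m / 2) • (2 • innerSL ℝ x)) x :=
    (hasGradientAt_iff_hasFDerivAt.mp hg).sub
      ((hasStrictFDerivAt_norm_sq x).hasFDerivAt.const_mul (m / 2))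
  have hconv := (strongConvexOn_iff_convex.mp hf).add_fderiv_sub_le hx hy hφ'
  have hy' : ‖y‖ ^ 2 = ‖x‖ ^ 2 + 2 * ⟪x, y - x⟫ + ‖y - x‖ ^ 2 := by
    rw [← norm_add_sq_real, add_sub_cancel]
  simp only [sub_apply, InnerProductSpace.toDual_apply_apply, smul_apply, coe_innerSL_apply,
    nsmul_eq_mul, Nat.cast_ofNat, smul_eq_mul] at hconv
  linear_combination hconv - m / 2 * hy'

theorem StrongConvexOn.mul_sub_le_norm_sq {f : E → ℝ} {s : Set E} {m : ℝ} {x y g' : E}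
    (hf : StrongConvexOn s m f) (hm : 0 ≤ m) (hx : x ∈ s) (hy : y ∈ s)
    (hg : HasGradientAt f g' x) :
    2 * m * (f x - f y) ≤ ‖g'‖ ^ 2 := by
  have hlb := hf.add_inner_add_sq_le hx hy hg
  have hcs : -(‖g'‖ * ‖y - x‖) ≤ ⟪g', y - x⟫ := neg_le_of_abs_le (abs_real_inner_le_norm _ _)
  nlinarith [sq_nonneg (‖g'‖ - m * ‖y - x‖)]

theorem HasGradientAt.hasDerivAt_comp_add_smul {f : E → ℝ} {g' x v : E} {t : ℝ}
    (h : HasGradientAt f g' (x + t • v)) :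
    HasDerivAt (fun t : ℝ => f (x + t • v)) ⟪g', v⟫ t := by
  have hline : HasDerivAt (fun t : ℝ => x + t • v) v t := by
    simpa using ((hasDerivAt_id t).smul_const v).const_add x
  have := (hasGradientAt_iff_hasFDerivAt.mp h).comp_hasDerivAt t hline
  exact this

theorem le_add_inner_add_sq_of_lipschitz_gradient {f : E → ℝ} {g : E → E} {L : ℝ}
    (hgrad : ∀ x, HasGradientAt f (g x) x) (hsmooth : ∀ x y, ‖g x - g y‖ ≤ L * ‖x - y‖)
    (x v : E) :
    f (x + v) ≤ f x + ⟪g x, v⟫ + L / 2 * ‖v‖ ^ 2 := by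
  set φ : ℝ → ℝ := fun t => f (x + t • v) - t * ⟪g x, v⟫ - L / 2 * ‖v‖ ^ 2 * t ^ 2
  have hφ (t : ℝ) : HasDerivAt φ (⟪g (x + t • v) - g x, v⟫ - L * ‖v‖ ^ 2 * t) t := by
    have := (((hgrad (x + t • v)).hasDerivAt_comp_add_smul).sub
      ((hasDerivAt_id t).mul_const ⟪g x, v⟫)).sub ((hasDerivAt_pow 2 t).const_mul (L / 2 * ‖v‖ ^ 2))
    refine this.congr_deriv ?_
    simp only [inner_sub_left]
    ring
  have hφ'_nonpos : ∀ t ∈ interior (Ici (0 : ℝ)), deriv φ t ≤ 0 := by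
    intro t ht
    rw [interior_Ici] at ht
    rw [(hφ t).deriv]
    have : ⟪g (x + t • v) - g x, v⟫ ≤ L * ‖v‖ ^ 2 * t := calc
      _ ≤ ‖g (x + t • v) - g x‖ * ‖v‖ := real_inner_le_norm _ _
      _ ≤ L * ‖x + t • v - x‖ * ‖v‖ := by gcongr; exact hsmooth _ _
      _ = L * ‖v‖ ^ 2 * t := by
        rw [add_sub_cancel_left, norm_smul, Real.norm_of_nonneg (le_of_lt ht)]; ring
    linarith
  have := (convex_Ici 0).image_sub_le_mul_sub_of_deriv_le
    (fun t _ => (hφ t).continuousAt.continuousWithinAt)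
    (fun t _ => (hφ t).differentiableAt.differentiableWithinAt) hφ'_nonpos
    0 self_mem_Ici 1 (by norm_num) (by norm_num)
  simp only [one_smul, one_mul, one_pow, mul_one, zero_smul, add_zero, zero_mul, sub_zero,
    ne_eq, OfNat.ofNat_ne_zero, not_false_eq_true, zero_pow, mul_zero, tsub_le_iff_right,
    zero_add, φ] at this
  linarith

theorem le_sub_inner_of_lipschitz_gradient_of_coercive {f : E → ℝ} {g : E → E} {L μ : ℝ}
    (hgrad : ∀ x, HasGradientAt f (g x) x) (hsmooth : ∀ x y, ‖g x - g y‖ ≤ L * ‖x - y‖)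
    (hL : 0 < L) (hμ : 0 ≤ μ) (x p : E) (hp : μ * ‖p‖ ^ 2 ≤ ⟪g x, p⟫) :
    f (x - (μ / L) • p) ≤ f x - μ / (2 * L) * ⟪g x, p⟫ := by
  have hdesc := le_add_inner_add_sq_of_lipschitz_gradient hgrad hsmooth x (-(μ / L) • p)
  rw [neg_smul, ← sub_eq_add_neg, inner_neg_right, real_inner_smul_right, norm_neg, norm_smul,
    mul_pow, Real.norm_eq_abs, sq_abs] at hdesc
  have hquad : L / 2 * ((μ / L) ^ 2 * ‖p‖ ^ 2) = μ / (2 * L) * (μ * ‖p‖ ^ 2) := by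
    field_simp
  have hstep : μ / L = 2 * (μ / (2 * L)) := by field_simp
  have : μ / (2 * L) * (μ * ‖p‖ ^ 2) ≤ μ / (2 * L) * ⟪g x, p⟫ := by gcongr
  linear_combination hdesc + hquad + this + ⟪g x, p⟫ * hstep

end

theorem min_div_one_eq_div_max {α : Type*} [Field α] [LinearOrder α] [IsStrictOrderedRing α]
    {a b : α} (ha : 0 < a) (hb : 0 < b) : min (a / b) 1 = a / max b a := by
  rcases le_total b a with h | h
  · rw [max_eq_right h, div_self ha.ne', min_eq_right ((one_le_div hb).2 h)]
  · rw [max_eq_left h, min_eq_left ((div_le_one hb).2 h)]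

theorem fednl_ls_one_step_general {d : ℕ}
    (f : EuclideanSpace ℝ (Fin d) → ℝ)
    (g : EuclideanSpace ℝ (Fin d) → EuclideanSpace ℝ (Fin d))
    (L Ltilde μ : ℝ) (hμ : 0 < μ) (hL : 0 < L) (hLt : 0 < Ltilde)
    (xstar : EuclideanSpace ℝ (Fin d))
    (hgrad : ∀ x, HasGradientAt f (g x) x)
    (hsmooth : ∀ x y, ‖g x - g y‖ ≤ L * ‖x - y‖)
    (hsc : StrongConvexOn Set.univ μ f)
    (G : EuclideanSpace ℝ (Fin d) →L[ℝ] EuclideanSpace ℝ (Fin d))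
    (hGsym : ∀ v w, ⟪G v, w⟫ = ⟪v, G w⟫)
    (hGpos : ∀ v, μ * ‖v‖ ^ 2 ≤ ⟪G v, v⟫)
    (hGnorm : ‖G‖ ≤ max Ltilde μ)
    (Ginv : EuclideanSpace ℝ (Fin d) →L[ℝ] EuclideanSpace ℝ (Fin d))
    (hinv2 : G.comp Ginv = ContinuousLinearMap.id ℝ _)
    (xk xnext : EuclideanSpace ℝ (Fin d))
    (hiter : xnext = xk - (1 / (L / μ)) • Ginv (g xk)) :
    f xnext - f xstar ≤ (1 - μ / L * min (μ / Ltilde) 1) * (f xk - f xstar) := by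
  set M := max Ltilde μ
  set p := Ginv (g xk)
  have hGp : G p = g xk := DFunLike.congr_fun hinv2 (g xk)
  have hGpositive : G.IsPositive :=
    (G.isPositive_iff).2 ⟨hGsym, fun v => (mul_nonneg hμ.le (sq_nonneg _)).trans (hGpos v)⟩
  have hcoercive : μ * ‖p‖ ^ 2 ≤ ⟪g xk, p⟫ := hGp ▸ hGpos p
  have hgrad_sq : ‖g xk‖ ^ 2 ≤ M * ⟪g xk, p⟫ :=
    hGp ▸ (hGpositive.norm_apply_sq_le p).trans
      (mul_le_mul_of_nonneg_right hGnorm (hGpositive.inner_nonneg_left p))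
  have hPL : 2 * μ * (f xk - f xstar) ≤ ‖g xk‖ ^ 2 :=
    hsc.mul_sub_le_norm_sq hμ.le trivial trivial (hgrad xk)
  have hdescent : f xnext ≤ f xk - μ / (2 * L) * ⟪g xk, p⟫ := by
    rw [hiter, one_div_div]
    exact le_sub_inner_of_lipschitz_gradient_of_coercive hgrad hsmooth hL hμ.le xk p hcoercive
  have hM : 0 < M := hμ.trans_le (le_max_right _ _)
  have hcontract : μ / L * (μ / M) * (f xk - f xstar) ≤ μ / (2 * L) * ⟪g xk, p⟫ := by
    have : μ / L * (μ / M) * (f xk - f xstar) = μ / (2 * L) * (2 * μ * (f xk - f xstar) / M) := by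
      field_simp
    rw [this]
    gcongr
    rw [div_le_iff₀ hM]
    linarith [hPL.trans hgrad_sq]
  rw [min_div_one_eq_div_max hμ hLt]
  linarith

/-- one step of FedNL-LS with matrix `G ⪰ μI`, `‖G‖ ≤ max{L̃, μ}` and
step size `1/κ`, `κ = L/μ`, decreases the function gap by the factor
`1 − (μ/L)·min{μ/L̃, 1}`. -/
theorem fednl_ls_one_step {d : ℕ}
    (f : EuclideanSpace ℝ (Fin d) → ℝ)
    (g : EuclideanSpace ℝ (Fin d) → EuclideanSpace ℝ (Fin d))
    (L Ltilde μ : ℝ) (hμ : 0 < μ) (hL : 0 < L) (hLt : 0 < Ltilde)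
    (xstar : EuclideanSpace ℝ (Fin d))
    (hgrad : ∀ x, HasGradientAt f (g x) x)
    (hsmooth : ∀ x y, ‖g x - g y‖ ≤ L * ‖x - y‖)
    (hsc : StrongConvexOn Set.univ μ f)
    (hstar : g xstar = 0)
    (G : EuclideanSpace ℝ (Fin d) →L[ℝ] EuclideanSpace ℝ (Fin d))
    (hGsym : ∀ v w, ⟪G v, w⟫ = ⟪v, G w⟫)
    (hGpos : ∀ v, μ * ‖v‖ ^ 2 ≤ ⟪G v, v⟫)
    (hGnorm : ‖G‖ ≤ max Ltilde μ)
    (Ginv : EuclideanSpace ℝ (Fin d) →L[ℝ] EuclideanSpace ℝ (Fin d))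
    (hinv1 : Ginv.comp G = ContinuousLinearMap.id ℝ _)
    (hinv2 : G.comp Ginv = ContinuousLinearMap.id ℝ _)
    (xk xnext : EuclideanSpace ℝ (Fin d))
    (hiter : xnext = xk - (1 / (L / μ)) • Ginv (g xk)) :
    f xnext - f xstar ≤ (1 - μ / L * min (μ / Ltilde) 1) * (f xk - f xstar) :=
  fednl_ls_one_step_general f g L Ltilde μ hμ hL hLt xstar hgrad hsmooth hsc G hGsym hGpos hGnorm
    Ginv hinv2 xk xnext hiter
end

section
/- Let f : R^d → R be convex with H-Lipschitz Hessian and minimizer x*. Suppose a sequence x^k satisfies, for all y ∈ R^d, f(x^{k+1}) ≤ f(y) + l‖y − x^k‖² + (H/3)‖y − x^k‖³ for some constant l ≥ 0, and ‖x^k − x*‖ ≤ R for all k. Define a_k = k², A_k = 1 + Σ_{i=1}^k i². Then for all k ≥ 1: f(x^k) − f(x*) ≤ (9 l R²)/k + (9 H R³)/k² + 3(f(x^0) − f(x*))/k³. -/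
set_option maxHeartbeats 1600000 in
/-- global sublinear `O(1/k)` rate for the cubic-regularized method. -/
theorem fednl_cr_global_sublinear_rate {d : ℕ}
    (f : EuclideanSpace ℝ (Fin d) → ℝ)
    (H l R : ℝ) (hH : 0 ≤ H) (hl : 0 ≤ l) (hR : 0 ≤ R)
    (hconv : ConvexOn ℝ Set.univ f)
    (xstar : EuclideanSpace ℝ (Fin d)) (hmin : ∀ x, f xstar ≤ f x)
    (x : ℕ → EuclideanSpace ℝ (Fin d))
    (hstep : ∀ k, ∀ y, f (x (k + 1)) ≤ f y + l * ‖y - x k‖ ^ 2 + H / 3 * ‖y - x k‖ ^ 3)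
    (hball : ∀ k, ‖x k - xstar‖ ≤ R) :
    ∀ k : ℕ, 1 ≤ k →
      f (x k) - f xstar ≤ 9 * l * R ^ 2 / k + 9 * H * R ^ 3 / (k : ℝ) ^ 2 +
        3 * (f (x 0) - f xstar) / (k : ℝ) ^ 3 := by
  obtain ⟨δ, hδ⟩ : ∃ δ : ℕ → ℝ, ∀ k, δ k = f (x k) - f xstar :=
    ⟨fun k => f (x k) - f xstar, fun _ => rfl⟩
  obtain ⟨A, hA0, hAsucc⟩ :
      ∃ A : ℕ → ℝ, A 0 = 1 ∧ ∀ k : ℕ, A (k + 1) = A k + ((k : ℝ) + 1) ^ 2 := by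
    refine ⟨fun k => 1 + ∑ i ∈ Finset.range k, ((i : ℝ) + 1) ^ 2, by simp, fun k => ?_⟩
    simp [Finset.sum_range_succ]; ring
  have hδnn : ∀ k, 0 ≤ δ k := fun k => (hδ k) ▸ sub_nonneg.2 (hmin (x k))
  have hApos : ∀ k, 0 < A k := by
    intro k
    induction k with
    | zero => rw [hA0]; norm_num
    | succ n ih => rw [hAsucc]; positivity
  have hAcube : ∀ k : ℕ, 1 + (k : ℝ) ^ 3 / 3 ≤ A k := by
    intro k
    induction k with
    | zero => simp [hA0]
    | succ n ih =>
      rw [hAsucc]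
      push_cast
      nlinarith [ih, Nat.cast_nonneg (α := ℝ) n]
  have key : ∀ k : ℕ, A (k + 1) * δ (k + 1) ≤
      A k * δ k + 3 * l * R ^ 2 * (2 * (k : ℝ) + 1) + 3 * H * R ^ 3 := by
    intro k
    have hA1 := hApos (k + 1)
    obtain ⟨σ, hσ⟩ : ∃ σ : ℝ, σ = ((k : ℝ) + 1) ^ 2 / A (k + 1) := ⟨_, rfl⟩
    have hσ0 : 0 ≤ σ := by rw [hσ]; positivity
    have hσ1 : σ ≤ 1 := by
      rw [hσ, div_le_one hA1]
      have := hApos k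
      rw [hAsucc]; linarith
    obtain ⟨y, hy⟩ : ∃ y, y = x k + σ • (xstar - x k) := ⟨_, rfl⟩
    have hynorm : ‖y - x k‖ = σ * ‖xstar - x k‖ := by
      simp [hy, norm_smul, abs_of_nonneg hσ0]
    have hfy : f y ≤ (1 - σ) * f (x k) + σ * f xstar := by
      have hc := hconv.2 (Set.mem_univ (x k)) (Set.mem_univ xstar)
        (by linarith : (0:ℝ) ≤ 1 - σ) hσ0 (by ring)
      have hyeq : y = (1 - σ) • x k + σ • xstar := by
        rw [hy]; module
      rw [hyeq]
      simpa using hc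
    have hnb : ‖y - x k‖ ≤ σ * R := by
      rw [hynorm]
      have : ‖xstar - x k‖ ≤ R := by rw [norm_sub_rev]; exact hball k
      exact mul_le_mul_of_nonneg_left this hσ0
    have hbound : f (x (k + 1)) ≤ (1 - σ) * f (x k) + σ * f xstar
        + l * (σ * R) ^ 2 + H / 3 * (σ * R) ^ 3 := by
      have h1 := hstep k y
      have h2 : l * ‖y - x k‖ ^ 2 ≤ l * (σ * R) ^ 2 :=
        mul_le_mul_of_nonneg_left (pow_le_pow_left₀ (norm_nonneg _) hnb 2) hl
      have h3 : H / 3 * ‖y - x k‖ ^ 3 ≤ H / 3 * (σ * R) ^ 3 :=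
        mul_le_mul_of_nonneg_left (pow_le_pow_left₀ (norm_nonneg _) hnb 3) (by linarith)
      linarith
    have hδrec : δ (k + 1) ≤ (1 - σ) * δ k + l * (σ * R) ^ 2 + H / 3 * (σ * R) ^ 3 := by
      rw [hδ, hδ]
      nlinarith [hbound]
    have hmul := mul_le_mul_of_nonneg_left hδrec hA1.le
    have hAσ : A (k + 1) * (1 - σ) = A k := by
      rw [hσ]
      field_simp
      rw [hAsucc]; ring
    have hs2 : σ ^ 2 * A (k + 1) = ((k : ℝ) + 1) ^ 4 / A (k + 1) := by
      rw [hσ]; field_simp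
    have hs3 : σ ^ 3 * A (k + 1) = ((k : ℝ) + 1) ^ 6 / A (k + 1) ^ 2 := by
      rw [hσ]; field_simp
    have hc0 : (0 : ℝ) ≤ (k : ℝ) := Nat.cast_nonneg k
    have hAc : 1 + ((k : ℝ) + 1) ^ 3 / 3 ≤ A (k + 1) := by
      have h := hAcube (k + 1); push_cast at h; exact h
    have hb2 : σ ^ 2 * A (k + 1) ≤ 3 * (2 * (k : ℝ) + 1) := by
      rw [hs2, div_le_iff₀ hA1]
      have hstep1 : ((k : ℝ) + 1) ^ 4 ≤ 3 * (2 * (k : ℝ) + 1) * (1 + ((k : ℝ) + 1) ^ 3 / 3) := by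
        have hid : 3 * (2 * (k : ℝ) + 1) * (1 + ((k : ℝ) + 1) ^ 3 / 3) - ((k : ℝ) + 1) ^ 4
            = 6 * (k : ℝ) + 3 + (k : ℝ) * ((k : ℝ) + 1) ^ 3 := by ring
        have hkc : (0 : ℝ) ≤ (k : ℝ) * ((k : ℝ) + 1) ^ 3 := mul_nonneg hc0 (by positivity)
        linarith
      have hstep2 : 3 * (2 * (k : ℝ) + 1) * (1 + ((k : ℝ) + 1) ^ 3 / 3)
          ≤ 3 * (2 * (k : ℝ) + 1) * A (k + 1) :=
        mul_le_mul_of_nonneg_left hAc (by linarith)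
      linarith
    have hb3 : σ ^ 3 * A (k + 1) ≤ 9 := by
      rw [hs3, div_le_iff₀ (by positivity : (0:ℝ) < A (k + 1) ^ 2)]
      have hB0 : (0 : ℝ) ≤ 1 + ((k : ℝ) + 1) ^ 3 / 3 := by positivity
      have hsq : (1 + ((k : ℝ) + 1) ^ 3 / 3) * (1 + ((k : ℝ) + 1) ^ 3 / 3)
          ≤ A (k + 1) * A (k + 1) := mul_le_mul hAc hAc hB0 (le_trans hB0 hAc)
      have hcb : (0 : ℝ) ≤ ((k : ℝ) + 1) ^ 3 := by positivity
      nlinarith [hsq, hcb]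
    have e1 : A (k + 1) * ((1 - σ) * δ k + l * (σ * R) ^ 2 + H / 3 * (σ * R) ^ 3)
        = (A (k + 1) * (1 - σ)) * δ k + (l * R ^ 2) * (σ ^ 2 * A (k + 1))
          + (H / 3 * R ^ 3) * (σ ^ 3 * A (k + 1)) := by ring
    rw [e1, hAσ] at hmul
    have t2 : (l * R ^ 2) * (σ ^ 2 * A (k + 1)) ≤ (l * R ^ 2) * (3 * (2 * (k : ℝ) + 1)) :=
      mul_le_mul_of_nonneg_left hb2 (by positivity)
    have t3 : (H / 3 * R ^ 3) * (σ ^ 3 * A (k + 1)) ≤ (H / 3 * R ^ 3) * 9 :=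
      mul_le_mul_of_nonneg_left hb3 (by positivity)
    linarith [hmul, t2, t3]
  have main : ∀ k : ℕ, A k * δ k ≤ δ 0 + 3 * l * R ^ 2 * (k : ℝ) ^ 2 + 3 * H * R ^ 3 * (k : ℝ) := by
    intro k
    induction k with
    | zero => rw [hA0]; simp
    | succ n ih =>
      have hk := key n
      push_cast
      nlinarith [hk, ih]
  intro k hk
  have hk1 : (1 : ℝ) ≤ (k : ℝ) := by exact_mod_cast hk
  have hk3 : (0 : ℝ) < (k : ℝ) ^ 3 := by positivity
  have hcube : (k : ℝ) ^ 3 / 3 ≤ A k := by nlinarith [hAcube k]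
  have hδk := hδnn k
  have hm := main k
  have h1 : δ k * ((k : ℝ) ^ 3 / 3) ≤ A k * δ k := by
    rw [mul_comm]; exact mul_le_mul_of_nonneg_right hcube hδk
  have hfin : δ k ≤ 3 * (δ 0 + 3 * l * R ^ 2 * (k : ℝ) ^ 2 + 3 * H * R ^ 3 * (k : ℝ)) / (k : ℝ) ^ 3 := by
    rw [le_div_iff₀ hk3]
    linarith [h1, hm]
  have hE : 3 * (δ 0 + 3 * l * R ^ 2 * (k : ℝ) ^ 2 + 3 * H * R ^ 3 * (k : ℝ)) / (k : ℝ) ^ 3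
      = 9 * l * R ^ 2 / (k : ℝ) + 9 * H * R ^ 3 / (k : ℝ) ^ 2 + 3 * δ 0 / (k : ℝ) ^ 3 := by
    field_simp
    ring
  rw [hE] at hfin
  rw [hδ, hδ] at hfin
  exact hfin
end

section
/- Suppose a nonnegative sequence r_k satisfies r_{k+1} ≤ C (1−ρ)^k r_k for all k ≥ 0, where C > 0 and ρ ∈ (0,1). Then for every k ≥ ⌈(2/ρ) log(max{C,1})⌉ one has r_{k+1} ≤ (1−ρ)^{k/2} r_k, and consequently there exists k_0 = O(1/ρ) such that for all k ≥ k_0, r_{k_0+k} ≤ (1−ρ)^{k(k−1)/2} r_{k_0}; in particular r_k ≤ ε is achieved after O(1/ρ + √((1/ρ) log(r_0/ε))) iterations. -/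
private lemma tri_succ (n : ℕ) : (n + 1) * n / 2 = n * (n - 1) / 2 + n := by
  cases n with
  | zero => rfl
  | succ m =>
    have h : (m + 1 + 1) * (m + 1) = (m + 1) * m + 2 * (m + 1) := by ring
    calc (m + 1 + 1) * (m + 1) / 2 = ((m + 1) * m + 2 * (m + 1)) / 2 := by rw [h]
      _ = (m + 1) * m / 2 + (m + 1) :=
        Nat.add_mul_div_left ((m+1)*m) (m+1) (by norm_num : 0 < 2)
      _ = (m + 1) * (m + 1 - 1) / 2 + (m + 1) := by simp

private lemma tri_cast (k : ℕ) :
    ((k * (k - 1) / 2 : ℕ) : ℝ) = (k : ℝ) * ((k : ℝ) - 1) / 2 := by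
  cases k with
  | zero => simp
  | succ n =>
    have h2 : 2 ∣ (n + 1) * n := by
      rw [mul_comm]
      exact (Nat.even_mul_succ_self n).two_dvd
    rw [Nat.succ_sub_one, Nat.cast_div h2 (by norm_num)]
    push_cast
    ring

private lemma sqrt_add_le (x y : ℝ) (hx : 0 ≤ x) (hy : 0 ≤ y) :
    Real.sqrt (x + y) ≤ Real.sqrt x + Real.sqrt y := by
  have h1 : Real.sqrt (x + y) ≤ Real.sqrt ((Real.sqrt x + Real.sqrt y) ^ 2) := by
    apply Real.sqrt_le_sqrt
    nlinarith [Real.sq_sqrt hx, Real.sq_sqrt hy, Real.sqrt_nonneg x, Real.sqrt_nonneg y]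
  have h2 : Real.sqrt ((Real.sqrt x + Real.sqrt y) ^ 2) = Real.sqrt x + Real.sqrt y :=
    Real.sqrt_sq (by positivity)
  linarith

private lemma sqrt_le_of_one_le (x : ℝ) (hx : 1 ≤ x) : Real.sqrt x ≤ x := by
  nlinarith [Real.sq_sqrt (by linarith : (0:ℝ) ≤ x), Real.sqrt_nonneg x,
    sq_nonneg (Real.sqrt x - 1)]

set_option maxHeartbeats 1600000 in
/-- turning the superlinear recursion `r_{k+1} ≤ C(1−ρ)^k r_k` into an
iteration complexity.  After `(2/ρ)·log(max{C,1})` iterations the per-step contraction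
factor is at most `(1−ρ)^{k/2}`; unrolling yields a triangular-exponent decay from some
`k₀ = O(1/ρ)`; and `r_K ≤ ε` is reached after `O(1/ρ + √((1/ρ)·log(r₀/ε)))` iterations. -/
theorem superlinear_recursion_complexity (r : ℕ → ℝ) (C ρ : ℝ)
    (hC : 0 < C) (hρ0 : 0 < ρ) (hρ1 : ρ < 1)
    (hrnn : ∀ k, 0 ≤ r k)
    (hrec : ∀ k, r (k + 1) ≤ C * (1 - ρ) ^ k * r k) :
    (∀ k : ℕ, 2 / ρ * Real.log (max C 1) ≤ (k : ℝ) →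
        r (k + 1) ≤ (1 - ρ) ^ ((k : ℝ) / 2) * r k) ∧
      (∃ k₀ : ℕ, (k₀ : ℝ) ≤ 2 / ρ * Real.log (max C 1) + 1 ∧
        ∀ k : ℕ, r (k₀ + k) ≤ (1 - ρ) ^ ((k : ℝ) * ((k : ℝ) - 1) / 2) * r k₀) ∧
      ∃ c : ℝ, 0 < c ∧ ∀ ε : ℝ, 0 < ε → ∃ K : ℕ,
        (K : ℝ) ≤ c * (1 / ρ + Real.sqrt (1 / ρ * max (Real.log (r 0 / ε)) 0)) + c ∧
          r K ≤ ε := by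
  have hρ' : (0:ℝ) < 1 - ρ := by linarith
  have hlog1 : Real.log (1 - ρ) ≤ -ρ := by
    have := Real.log_le_sub_one_of_pos hρ'
    linarith
  set L := Real.log (max C 1) with hLdef
  have hL0 : 0 ≤ L := Real.log_nonneg (le_max_right _ _)
  have hLC : Real.log C ≤ L := by
    rcases le_total C 1 with h | h
    · exact (Real.log_nonpos hC.le h).trans hL0
    · rw [hLdef, max_eq_left h]
  -- Part 1
  have part1 : ∀ k : ℕ, 2 / ρ * L ≤ (k : ℝ) →
      r (k + 1) ≤ (1 - ρ) ^ ((k : ℝ) / 2) * r k := by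
    intro k hk
    have hx : (0:ℝ) < (1 - ρ) ^ ((k:ℝ)/2) := Real.rpow_pos_of_pos hρ' _
    have key : C * (1 - ρ) ^ ((k:ℝ)/2) ≤ 1 := by
      have hlogle : Real.log (C * (1 - ρ) ^ ((k:ℝ)/2)) ≤ 0 := by
        rw [Real.log_mul (ne_of_gt hC) (ne_of_gt hx), Real.log_rpow hρ']
        have h2 : ρ/2 * (2/ρ * L) = L := by field_simp
        have h3 : ρ/2 * (2/ρ * L) ≤ ρ/2 * k :=
          mul_le_mul_of_nonneg_left hk (by linarith)
        have h4 : (k:ℝ)/2 * Real.log (1-ρ) ≤ (k:ℝ)/2 * (-ρ) :=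
          mul_le_mul_of_nonneg_left hlog1 (by positivity)
        nlinarith
      calc C * (1-ρ) ^ ((k:ℝ)/2)
          = Real.exp (Real.log (C * (1-ρ) ^ ((k:ℝ)/2))) := (Real.exp_log (by positivity)).symm
        _ ≤ Real.exp 0 := Real.exp_le_exp.mpr hlogle
        _ = 1 := Real.exp_zero
    have step : C * (1-ρ)^k ≤ (1-ρ) ^ ((k:ℝ)/2) := by
      have hsplit : ((1-ρ):ℝ)^k = (1-ρ) ^ ((k:ℝ)/2) * (1-ρ) ^ ((k:ℝ)/2) := by
        rw [← Real.rpow_add hρ', ← Real.rpow_natCast (1-ρ) k]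
        norm_num
      rw [hsplit, ← mul_assoc]
      nlinarith [key, hx.le]
    calc r (k+1) ≤ C * (1-ρ)^k * r k := hrec k
      _ ≤ (1-ρ) ^ ((k:ℝ)/2) * r k := mul_le_mul_of_nonneg_right step (hrnn k)
  -- Part 2 setup
  set k₀ : ℕ := ⌈2/ρ * L⌉₊ with hk₀def
  have hk₀ge : 2/ρ * L ≤ (k₀ : ℝ) := Nat.le_ceil _
  have hk₀le : (k₀ : ℝ) ≤ 2/ρ * L + 1 :=
    le_of_lt (Nat.ceil_lt_add_one (mul_nonneg (by positivity) hL0))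
  have hCk : C * (1 - ρ) ^ k₀ ≤ 1 := by
    have h2 : Real.log C ≤ ρ * k₀ := by
      have h3 : ρ * (2/ρ * L) = 2 * L := by field_simp
      have h4 : ρ * (2/ρ * L) ≤ ρ * k₀ := mul_le_mul_of_nonneg_left hk₀ge hρ0.le
      linarith
    have h1 : Real.log C + (k₀:ℝ) * Real.log (1-ρ) ≤ 0 := by
      have h5 : (k₀:ℝ) * Real.log (1-ρ) ≤ (k₀:ℝ) * (-ρ) :=
        mul_le_mul_of_nonneg_left hlog1 (Nat.cast_nonneg k₀)
      nlinarith
    calc C * (1-ρ)^k₀ = Real.exp (Real.log C + (k₀:ℝ) * Real.log (1-ρ)) := by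
          rw [Real.exp_add, Real.exp_log hC, ← Real.log_pow, Real.exp_log (pow_pos hρ' _)]
      _ ≤ Real.exp 0 := Real.exp_le_exp.mpr h1
      _ = 1 := Real.exp_zero
  have unroll : ∀ k : ℕ,
      r (k₀ + k) ≤ (C * (1-ρ)^k₀)^k * (1-ρ)^(k*(k-1)/2) * r k₀ := by
    intro k
    induction k with
    | zero => simp
    | succ n ih =>
      have h1 : r (k₀ + (n+1)) ≤ C * (1-ρ)^(k₀+n) * r (k₀ + n) := by
        have := hrec (k₀ + n)
        simpa [Nat.add_assoc] using this
      have h2 : C * (1-ρ)^(k₀+n) * r (k₀+n)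
          ≤ C * (1-ρ)^(k₀+n) * ((C * (1-ρ)^k₀)^n * (1-ρ)^(n*(n-1)/2) * r k₀) :=
        mul_le_mul_of_nonneg_left ih (by positivity)
      have h3 : C * (1-ρ)^(k₀+n) * ((C * (1-ρ)^k₀)^n * (1-ρ)^(n*(n-1)/2) * r k₀)
          = (C * (1-ρ)^k₀)^(n+1) * (1-ρ)^((n+1)*((n+1)-1)/2) * r k₀ := by
        rw [Nat.add_sub_cancel, tri_succ, pow_succ, pow_add, pow_add]
        ring
      calc r (k₀ + (n+1)) ≤ C * (1-ρ)^(k₀+n) * r (k₀ + n) := h1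
        _ ≤ _ := h2
        _ = _ := h3
  have unroll' : ∀ k : ℕ, r (k₀ + k) ≤ (1-ρ)^(k*(k-1)/2) * r k₀ := by
    intro k
    have h2 : (C * (1-ρ)^k₀)^k ≤ 1 := pow_le_one₀ (by positivity) hCk
    calc r (k₀ + k) ≤ (C * (1-ρ)^k₀)^k * (1-ρ)^(k*(k-1)/2) * r k₀ := unroll k
      _ ≤ 1 * (1-ρ)^(k*(k-1)/2) * r k₀ := by
          apply mul_le_mul_of_nonneg_right _ (hrnn k₀)
          exact mul_le_mul_of_nonneg_right h2 (by positivity)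
      _ = (1-ρ)^(k*(k-1)/2) * r k₀ := by ring
  have part2 : ∀ k : ℕ, r (k₀ + k) ≤ (1-ρ) ^ ((k:ℝ) * ((k:ℝ) - 1) / 2) * r k₀ := by
    intro k
    have h3 : (1-ρ) ^ ((k:ℝ) * ((k:ℝ) - 1) / 2) = (1-ρ)^(k*(k-1)/2 : ℕ) := by
      rw [← Real.rpow_natCast (1-ρ) (k*(k-1)/2), tri_cast]
    rw [h3]
    exact unroll' k
  refine ⟨part1, ⟨k₀, hk₀le, part2⟩, ?_⟩
  -- Part 3
  rcases eq_or_lt_of_le (hrnn k₀) with hR | hR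
  · -- r k₀ = 0
    refine ⟨(k₀:ℝ) + 1, by positivity, fun ε hε => ⟨k₀, ?_, by rw [← hR]; exact hε.le⟩⟩
    have h1 : (1:ℝ) ≤ 1/ρ := one_le_one_div hρ0 hρ1.le
    have h2 : (0:ℝ) ≤ Real.sqrt (1 / ρ * max (Real.log (r 0 / ε)) 0) := Real.sqrt_nonneg _
    nlinarith [Nat.cast_nonneg (α := ℝ) k₀]
  · -- r k₀ > 0
    have hr00 : 0 < r 0 := by
      rcases (hrnn 0).lt_or_eq with h | h
      · exact h
      · exfalso
        have hz : ∀ k, r k = 0 := by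
          intro k
          induction k with
          | zero => exact h.symm
          | succ n ih =>
            refine le_antisymm ?_ (hrnn _)
            have := hrec n
            rw [ih] at this
            simpa using this
        rw [hz k₀] at hR
        exact lt_irrefl _ hR
    set A := max (Real.log (r k₀ / r 0)) 0 with hAdef
    have hA0 : (0:ℝ) ≤ A := le_max_right _ _
    set c := 2*L + Real.sqrt (2*A) + 4 with hcdef
    have hc4 : (4:ℝ) ≤ c := by
      have := Real.sqrt_nonneg (2*A); linarith
    refine ⟨c, by linarith, fun ε hε => ?_⟩
    set M := max (Real.log (r 0 / ε)) 0 with hMdef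
    have hM0 : (0:ℝ) ≤ M := le_max_right _ _
    set s := Real.sqrt (2/ρ * (A + M)) with hsdef
    have hs0 : 0 ≤ s := Real.sqrt_nonneg _
    set k : ℕ := ⌈1 + s⌉₊ with hkdef
    have hkge : 1 + s ≤ (k:ℝ) := Nat.le_ceil _
    have hkle : (k:ℝ) ≤ s + 2 := by
      have := Nat.ceil_lt_add_one (by linarith : (0:ℝ) ≤ 1 + s)
      rw [← hkdef] at this
      linarith
    have hTnn : (0:ℝ) ≤ (k:ℝ) * ((k:ℝ) - 1) / 2 := by nlinarith
    have hT : ρ * ((k*(k-1)/2 : ℕ):ℝ) ≥ A + M := by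
      rw [tri_cast]
      have hsq : s^2 = 2/ρ * (A+M) := Real.sq_sqrt (by positivity)
      have hkk : s^2 ≤ (k:ℝ) * ((k:ℝ) - 1) := by
        nlinarith [hkge, hs0, Nat.cast_nonneg (α := ℝ) k]
      have h7 : ρ * s^2 = 2*(A+M) := by rw [hsq]; field_simp
      have h8 : ρ * s^2 ≤ ρ * ((k:ℝ) * ((k:ℝ) - 1)) :=
        mul_le_mul_of_nonneg_left hkk hρ0.le
      linarith
    have hle : Real.log (r k₀ / ε) ≤ A + M := by
      have hsplit : Real.log (r k₀ / ε) = Real.log (r k₀ / r 0) + Real.log (r 0 / ε) := by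
        rw [Real.log_div hR.ne' hε.ne', Real.log_div hR.ne' hr00.ne',
          Real.log_div hr00.ne' hε.ne']
        ring
      rw [hsplit]
      exact add_le_add (le_max_left _ _) (le_max_left _ _)
    refine ⟨k₀ + k, ?_, ?_⟩
    · -- complexity bound
      push_cast
      have h1 : (1:ℝ) ≤ 1/ρ := one_le_one_div hρ0 hρ1.le
      set p := (1:ℝ)/ρ with hpdef
      set u := Real.sqrt (2*A) with hudef
      set v := Real.sqrt (1/ρ * M) with hvdef
      set w := Real.sqrt (1/ρ) with hwdef
      have hu0 : 0 ≤ u := Real.sqrt_nonneg _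
      have hv0 : 0 ≤ v := Real.sqrt_nonneg _
      have hw0 : 0 ≤ w := Real.sqrt_nonneg _
      have h_s1 : s ≤ Real.sqrt (2/ρ*A) + Real.sqrt (2/ρ*M) := by
        rw [hsdef, show 2/ρ*(A+M) = 2/ρ*A + 2/ρ*M by ring]
        exact sqrt_add_le _ _ (by positivity) (by positivity)
      have h_s2 : Real.sqrt (2/ρ*A) = u * w := by
        rw [hudef, hwdef, ← Real.sqrt_mul (by positivity)]
        ring_nf
      have h_s3 : Real.sqrt (2/ρ*M) = Real.sqrt 2 * v := by
        rw [hvdef, ← Real.sqrt_mul (by norm_num)]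
        ring_nf
      have h_w : w ≤ p := sqrt_le_of_one_le _ h1
      have h_uw : u * w ≤ u * p := mul_le_mul_of_nonneg_left h_w hu0
      have h_sqrt2 : Real.sqrt 2 ≤ 2 := sqrt_le_of_one_le _ (by norm_num)
      have h_s2v : Real.sqrt 2 * v ≤ 2 * v := mul_le_mul_of_nonneg_right h_sqrt2 hv0
      have h_k₀ : (k₀:ℝ) ≤ 2*L*p + 1 := by
        have : 2/ρ*L = 2*L*p := by rw [hpdef]; ring
        linarith [hk₀le]
      have h_s : s ≤ u * p + 2 * v := by
        rw [h_s2, h_s3] at h_s1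
        linarith
      -- goal : k₀ + k ≤ c * (p + v) + c
      rw [hcdef]
      have hexp : (2*L + Real.sqrt (2*A) + 4) * (p + v) + (2*L + Real.sqrt (2*A) + 4)
          = 2*L*p + u*p + 4*p + 2*L*v + u*v + 4*v + 2*L + u + 4 := by
        rw [← hudef]; ring
      rw [hexp]
      have hLv : 0 ≤ L*v := by positivity
      have huv : 0 ≤ u*v := by positivity
      linarith [h_s, hkle, h_k₀, h1, hLv, huv, hv0, hu0, hL0]
    · -- accuracy
      have hpow : ((1-ρ):ℝ)^(k*(k-1)/2) ≤ ε / r k₀ := by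
        have h1 : ((1-ρ):ℝ)^(k*(k-1)/2)
            = Real.exp (((k*(k-1)/2 : ℕ):ℝ) * Real.log (1-ρ)) := by
          rw [← Real.log_pow, Real.exp_log (pow_pos hρ' _)]
        have h2 : ((k*(k-1)/2 : ℕ):ℝ) * Real.log (1-ρ) ≤ -Real.log (r k₀ / ε) := by
          have h5 : ((k*(k-1)/2 : ℕ):ℝ) * Real.log (1-ρ) ≤ ((k*(k-1)/2 : ℕ):ℝ) * (-ρ) :=
            mul_le_mul_of_nonneg_left hlog1 (Nat.cast_nonneg _)
          nlinarith [hT, hle]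
        rw [h1]
        calc Real.exp (((k*(k-1)/2 : ℕ):ℝ) * Real.log (1-ρ))
            ≤ Real.exp (-Real.log (r k₀ / ε)) := Real.exp_le_exp.mpr h2
          _ = ε / r k₀ := by
              rw [Real.exp_neg, Real.exp_log (div_pos hR hε), inv_div]
      calc r (k₀ + k) ≤ (1-ρ)^(k*(k-1)/2) * r k₀ := unroll' k
        _ ≤ (ε / r k₀) * r k₀ := mul_le_mul_of_nonneg_right hpow (hrnn k₀)
        _ = ε := by field_simp
end

section
/- Let A_M ∈ (0,1] and p ∈ (0,1], and suppose nonnegative random sequences γ_k (≈‖z^k−x*‖²) and ν_k (≈‖w^k−x*‖²) satisfy E_k[γ_{k+1}] ≤ (1 − 2A_M/3)γ_k + (A_M/6)ν_k and E_k[ν_{k+1}] = (1−p)ν_k + p γ_k. Then the Lyapunov function Φ_k := γ_k + (A_M/(3p))ν_k satisfies E_k[Φ_{k+1}] ≤ (1 − min{A_M/3, p/2}) Φ_k, and hence E[Φ_k] ≤ (1 − min{A_M/3, p/2})^k Φ_0. -/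
/-!
Adding `A_M/(3p)` times the `ν`-recursion to the `γ`-recursion gives the `γ`-coefficient
`1 - A_M/3` and the `ν`-coefficient `(1 - p/2) A_M/(3p)`, each at most `1 - min{A_M/3, p/2}` times
the corresponding coefficient of `Φ_k`. Taking expectations (the tower property) turns the
conditional contraction into geometric decay of `E[Φ_k]`.
-/

open MeasureTheory

theorem condExp_add_const_mul {Ω : Type*} {m m0 : MeasurableSpace Ω} {μ : Measure Ω}
    {f g : Ω → ℝ} (hf : Integrable f μ) (hg : Integrable g μ) (c : ℝ) :
    μ[fun ω => f ω + c * g ω|m] =ᵐ[μ] fun ω => μ[f|m] ω + c * μ[g|m] ω := by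
  filter_upwards [condExp_add hf (hg.const_mul c) m, condExp_smul (μ := μ) c g m]
    with ω hadd hsmul
  exact hadd.trans (congrArg (μ[f|m] ω + ·) hsmul)

theorem integral_le_pow_mul_of_condExp_le {Ω : Type*} {m0 : MeasurableSpace Ω}
    {μ : Measure Ω} [IsFiniteMeasure μ] (ℱ : Filtration ℕ m0) {Φ : ℕ → Ω → ℝ} {r : ℝ}
    (hr : 0 ≤ r) (hΦ : ∀ k, Integrable (Φ k) μ)
    (hstep : ∀ k, μ[Φ (k + 1)|ℱ k] ≤ᵐ[μ] fun ω => r * Φ k ω) (k : ℕ) :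
    ∫ ω, Φ k ω ∂μ ≤ r ^ k * ∫ ω, Φ 0 ω ∂μ := by
  induction k with
  | zero => simp
  | succ k ih =>
    calc ∫ ω, Φ (k + 1) ω ∂μ = ∫ ω, μ[Φ (k + 1)|ℱ k] ω ∂μ := (integral_condExp (ℱ.le k)).symm
      _ ≤ ∫ ω, r * Φ k ω ∂μ := integral_mono_ae integrable_condExp ((hΦ k).const_mul r) (hstep k)
      _ = r * ∫ ω, Φ k ω ∂μ := integral_const_mul r _
      _ ≤ r * (r ^ k * ∫ ω, Φ 0 ω ∂μ) := mul_le_mul_of_nonneg_left ih hr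
      _ = r ^ (k + 1) * ∫ ω, Φ 0 ω ∂μ := by ring

theorem fednl_bc_lyapunov_step_le {AM p γ ν : ℝ} (hAM : 0 ≤ AM) (hp : 0 < p)
    (hγ : 0 ≤ γ) (hν : 0 ≤ ν) :
    (1 - 2 * AM / 3) * γ + AM / 6 * ν + AM / (3 * p) * ((1 - p) * ν + p * γ)
      ≤ (1 - min (AM / 3) (p / 2)) * (γ + AM / (3 * p) * ν) := by
  set m := min (AM / 3) (p / 2)
  have hgap : (1 - m) * (γ + AM / (3 * p) * ν)
      - ((1 - 2 * AM / 3) * γ + AM / 6 * ν + AM / (3 * p) * ((1 - p) * ν + p * γ))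
      = (AM / 3 - m) * γ + AM / (3 * p) * (p / 2 - m) * ν := by
    field_simp
    ring
  have hmA : 0 ≤ AM / 3 - m := sub_nonneg.mpr (min_le_left _ _)
  have hmp : 0 ≤ p / 2 - m := sub_nonneg.mpr (min_le_right _ _)
  have : 0 ≤ (AM / 3 - m) * γ + AM / (3 * p) * (p / 2 - m) * ν := by positivity
  linarith

theorem fednl_bc_lyapunov_contraction_general {Ω : Type*} {m0 : MeasurableSpace Ω}
    (μ : Measure Ω) [IsProbabilityMeasure μ] (ℱ : Filtration ℕ m0)
    (AM p : ℝ) (hAM0 : 0 < AM) (hAM1 : AM ≤ 1) (hp0 : 0 < p)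
    (γ ν : ℕ → Ω → ℝ)
    (hγnn : ∀ k ω, 0 ≤ γ k ω) (hνnn : ∀ k ω, 0 ≤ ν k ω)
    (hγint : ∀ k, Integrable (γ k) μ) (hνint : ∀ k, Integrable (ν k) μ)
    (hrecγ : ∀ k, μ[γ (k + 1)|ℱ k] ≤ᵐ[μ]
      fun ω => (1 - 2 * AM / 3) * γ k ω + AM / 6 * ν k ω)
    (hrecν : ∀ k, μ[ν (k + 1)|ℱ k] =ᵐ[μ] fun ω => (1 - p) * ν k ω + p * γ k ω) :
    (∀ k, μ[fun ω => γ (k + 1) ω + AM / (3 * p) * ν (k + 1) ω|ℱ k] ≤ᵐ[μ]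
        fun ω => (1 - min (AM / 3) (p / 2)) * (γ k ω + AM / (3 * p) * ν k ω)) ∧
      ∀ k, ∫ ω, (γ k ω + AM / (3 * p) * ν k ω) ∂μ ≤
        (1 - min (AM / 3) (p / 2)) ^ k * ∫ ω, (γ 0 ω + AM / (3 * p) * ν 0 ω) ∂μ := by
  have hrate : 0 ≤ 1 - min (AM / 3) (p / 2) := by linarith [min_le_left (AM / 3) (p / 2)]
  have hstep : ∀ k, μ[fun ω => γ (k + 1) ω + AM / (3 * p) * ν (k + 1) ω|ℱ k] ≤ᵐ[μ]
      fun ω => (1 - min (AM / 3) (p / 2)) * (γ k ω + AM / (3 * p) * ν k ω) := by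
    intro k
    filter_upwards [condExp_add_const_mul (m := ℱ k) (hγint (k + 1)) (hνint (k + 1)) _,
      hrecγ k, hrecν k] with ω hΦ hγ hν
    rw [hΦ, hν]
    exact (add_le_add_left hγ _).trans
      (fednl_bc_lyapunov_step_le hAM0.le hp0 (hγnn k ω) (hνnn k ω))
  exact ⟨hstep, integral_le_pow_mul_of_condExp_le ℱ hrate
    (fun k => (hγint k).add ((hνint k).const_mul _)) hstep⟩

/-- the FedNL-BC Lyapunov function `Φ_k = γ_k + (A_M/(3p)) ν_k`
contracts at rate `1 − min{A_M/3, p/2}` in conditional expectation, hence in expectation. -/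
theorem fednl_bc_lyapunov_contraction {Ω : Type*} {m0 : MeasurableSpace Ω}
    (μ : Measure Ω) [IsProbabilityMeasure μ] (ℱ : Filtration ℕ m0)
    (AM p : ℝ) (hAM0 : 0 < AM) (hAM1 : AM ≤ 1) (hp0 : 0 < p) (hp1 : p ≤ 1)
    (γ ν : ℕ → Ω → ℝ)
    (hγnn : ∀ k ω, 0 ≤ γ k ω) (hνnn : ∀ k ω, 0 ≤ ν k ω)
    (hγmeas : ∀ k, StronglyMeasurable[ℱ k] (γ k))
    (hνmeas : ∀ k, StronglyMeasurable[ℱ k] (ν k))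
    (hγint : ∀ k, Integrable (γ k) μ) (hνint : ∀ k, Integrable (ν k) μ)
    (hrecγ : ∀ k, μ[γ (k + 1)|ℱ k] ≤ᵐ[μ]
      fun ω => (1 - 2 * AM / 3) * γ k ω + AM / 6 * ν k ω)
    (hrecν : ∀ k, μ[ν (k + 1)|ℱ k] =ᵐ[μ] fun ω => (1 - p) * ν k ω + p * γ k ω) :
    (∀ k, μ[fun ω => γ (k + 1) ω + AM / (3 * p) * ν (k + 1) ω|ℱ k] ≤ᵐ[μ]
        fun ω => (1 - min (AM / 3) (p / 2)) * (γ k ω + AM / (3 * p) * ν k ω)) ∧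
      ∀ k, ∫ ω, (γ k ω + AM / (3 * p) * ν k ω) ∂μ ≤
        (1 - min (AM / 3) (p / 2)) ^ k * ∫ ω, (γ 0 ω + AM / (3 * p) * ν 0 ω) ∂μ :=
  fednl_bc_lyapunov_contraction_general μ ℱ AM p hAM0 hAM1 hp0 γ ν hγnn hνnn hγint hνint hrecγ hrecν
end
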